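/- Let 𝒯 be a hierarchical T-mesh and g ∈ S̄(1,1,0,0,𝒯). Let ȳ₀ < ȳ₁ < ⋯ < ȳ_N be the distinct y-coordinates of the horizontal l-edges of 𝒯. For an interior horizontal l-edge ℓ at height ȳ_i whose endpoints have x-coordinates a < b, let y^b < ȳ_i < y^t denote the heights of its two support l-edges. Then the following are equivalent: (1) for every interior horizontal l-edge ℓ of 𝒯, (ȳ_{i+1}−ȳ_{i−1}) ∫_a^b g(s,ȳ_i) ds = (ȳ_{i+1}−ȳ_i) ∫_a^b g(s,ȳ_{i−1}) ds + (ȳ_i−ȳ_{i−1}) ∫_a^b g(s,ȳ_{i+1}) ds; (2) for every interior horizontal l-edge ℓ of 𝒯, (y^t−y^b) ∫_a^b g(s,ȳ_i) ds = (y^t−ȳ_i) ∫_a^b g(s,y^b) ds + (ȳ_i−y^b) ∫_a^b g(s,y^t) ds. The analogous equivalence holds for interior vertical l-edges. -/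

import Mathlib

open Filter Set MeasureTheory
open scoped Topology

noncomputable section

/-- A closed axis-aligned rectangle with positive side lengths. -/
structure Rect where
  xmin : ℝ
  xmax : ℝ
  ymin : ℝ
  ymax : ℝ
  hx : xmin < xmax
  hy : ymin < ymax

/-- The set of points of a rectangle. -/
def Rect.toSet (c : Rect) : Set (ℝ × ℝ) :=
  Set.Icc c.xmin c.xmax ×ˢ Set.Icc c.ymin c.ymax

/-- A regular T-mesh: finitely many cells (closed axis-aligned rectangles) with pairwise
disjoint interiors whose union is a closed axis-aligned rectangle. -/
structure TMesh where
  cells : Set Rect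
  outer : Rect
  finite_cells : cells.Finite
  pairwise_disjoint : cells.Pairwise fun c d => Disjoint (interior c.toSet) (interior d.toSet)
  union_eq : (⋃ c ∈ cells, c.toSet) = outer.toSet

/-- The region occupied by a T-mesh. -/
def TMesh.Omega (T : TMesh) : Set (ℝ × ℝ) := T.outer.toSet

/-- The edge skeleton of a T-mesh: the union of the boundaries of all cells. -/
def TMesh.skeleton (T : TMesh) : Set (ℝ × ℝ) := ⋃ c ∈ T.cells, frontier c.toSet

/-- A vertex of the mesh: a corner of some cell. -/
def IsVertexOf (T : TMesh) (p : ℝ × ℝ) : Prop :=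
  ∃ c ∈ T.cells, (p.1 = c.xmin ∨ p.1 = c.xmax) ∧ (p.2 = c.ymin ∨ p.2 = c.ymax)

/-- A crossing vertex: an interior vertex from which four small axis-parallel segments
stay inside the edge skeleton. -/
def IsCrossingVertex (T : TMesh) (p : ℝ × ℝ) : Prop :=
  IsVertexOf T p ∧ p ∈ interior T.Omega ∧
    ∃ ε > (0 : ℝ), segment ℝ p (p + (ε, 0)) ⊆ T.skeleton ∧
      segment ℝ p (p - (ε, 0)) ⊆ T.skeleton ∧
      segment ℝ p (p + (0, ε)) ⊆ T.skeleton ∧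
      segment ℝ p (p - (0, ε)) ⊆ T.skeleton

/-- A horizontal closed segment of positive length. -/
def IsHorizSeg (s : Set (ℝ × ℝ)) : Prop :=
  ∃ a b y : ℝ, a < b ∧ s = Set.Icc a b ×ˢ ({y} : Set ℝ)

/-- A vertical closed segment of positive length. -/
def IsVertSeg (s : Set (ℝ × ℝ)) : Prop :=
  ∃ x a b : ℝ, a < b ∧ s = ({x} : Set ℝ) ×ˢ Set.Icc a b

/-- An l-edge: a maximal axis-parallel closed segment of positive length contained in the
edge skeleton. -/
def IsLEdge (T : TMesh) (s : Set (ℝ × ℝ)) : Prop :=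
  (IsHorizSeg s ∨ IsVertSeg s) ∧ s ⊆ T.skeleton ∧
    ∀ s', (IsHorizSeg s' ∨ IsVertSeg s') → s' ⊆ T.skeleton → s ⊆ s' → s' = s

def IsBoundaryLEdge (T : TMesh) (s : Set (ℝ × ℝ)) : Prop :=
  IsLEdge T s ∧ s ⊆ frontier T.Omega

def IsInteriorLEdge (T : TMesh) (s : Set (ℝ × ℝ)) : Prop :=
  IsLEdge T s ∧ ¬ s ⊆ frontier T.Omega

/-- There is a horizontal l-edge with endpoints `(a,y)`, `(b,y)`. -/
def HorizLEdgeAt (T : TMesh) (a b y : ℝ) : Prop :=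
  a < b ∧ IsLEdge T (Set.Icc a b ×ˢ ({y} : Set ℝ))

/-- The number `V⁺` of crossing vertices. -/
def crossingCount (T : TMesh) : ℕ := {p | IsCrossingVertex T p}.ncard

/-- The number `E` of interior l-edges. -/
def interiorLEdgeCount (T : TMesh) : ℕ := {s | IsInteriorLEdge T s}.ncard

/-- The number `F` of cells. -/
def cellCount (T : TMesh) : ℕ := T.cells.ncard

/-! Partial derivatives (within a set) and smoothness. -/

def pdXW (S : Set (ℝ × ℝ)) (f : ℝ × ℝ → ℝ) : ℝ × ℝ → ℝ :=
  fun p => derivWithin (fun x => f (x, p.2)) {x | (x, p.2) ∈ S} p.1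

def pdYW (S : Set (ℝ × ℝ)) (f : ℝ × ℝ → ℝ) : ℝ × ℝ → ℝ :=
  fun p => derivWithin (fun y => f (p.1, y)) {y | (p.1, y) ∈ S} p.2

/-- The mixed partial derivative `∂^{i+j} f/∂x^i∂y^j`, taken within the set `S`. -/
def mpW (S : Set (ℝ × ℝ)) (i j : ℕ) (f : ℝ × ℝ → ℝ) : ℝ × ℝ → ℝ :=
  (pdYW S)^[j] ((pdXW S)^[i] f)

/-- `f` has continuous mixed partials `∂^{i+j}f/∂x^i∂y^j` on `S` for all `0 ≤ i ≤ α`,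
`0 ≤ j ≤ β` (smoothness indices `α, β ∈ ℤ` may be `-1`, in which case nothing is required
in that variable). -/
def SmoothWithin (S : Set (ℝ × ℝ)) (α β : ℤ) (f : ℝ × ℝ → ℝ) : Prop :=
  (∀ i j : ℕ, (i : ℤ) ≤ α → (j : ℤ) ≤ β → ContinuousOn (mpW S i j f) S) ∧
  (∀ i : ℕ, (i : ℤ) < α → ∀ p ∈ S,
    HasDerivWithinAt (fun x => (pdXW S)^[i] f (x, p.2)) ((pdXW S)^[i+1] f p)
      {x | (x, p.2) ∈ S} p.1) ∧
  (∀ i j : ℕ, (i : ℤ) ≤ α → (j : ℤ) < β → ∀ p ∈ S,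
    HasDerivWithinAt (fun y => mpW S i j f (p.1, y)) (mpW S i (j+1) f p)
      {y | (p.1, y) ∈ S} p.2)

/-- `f` agrees on each cell of `T` with a polynomial of bidegree at most `(m,n)`. -/
def PiecewisePoly (m n : ℕ) (T : TMesh) (f : ℝ × ℝ → ℝ) : Prop :=
  ∀ c ∈ T.cells, ∃ p : MvPolynomial (Fin 2) ℝ,
    p.degreeOf 0 ≤ m ∧ p.degreeOf 1 ≤ n ∧
    ∀ q ∈ c.toSet, f q = MvPolynomial.eval ![q.1, q.2] p

/-- The spline space with homogeneous boundary conditions `S̄(m,n,α,β,T)`. -/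
def SBar (m n : ℕ) (α β : ℤ) (T : TMesh) : Set (ℝ × ℝ → ℝ) :=
  {f | (∀ p, p ∉ T.Omega → f p = 0) ∧ PiecewisePoly m n T f ∧ SmoothWithin Set.univ α β f}

/-- The spline space `S(m,n,α,β,T)` over the T-mesh: membership only constrains the values
on the occupied region `Ω` (smoothness is required within `Ω`). -/
def SOn (m n : ℕ) (α β : ℤ) (T : TMesh) : Set (ℝ × ℝ → ℝ) :=
  {f | PiecewisePoly m n T f ∧ SmoothWithin T.Omega α β f}

/-- The set of functions `S` is a linear space of dimension `d`. -/
def HasDim (S : Set (ℝ × ℝ → ℝ)) (d : ℕ) : Prop :=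
  ∃ b : Fin d → (ℝ × ℝ → ℝ), (∀ i, b i ∈ S) ∧ LinearIndependent ℝ b ∧
    ∀ f ∈ S, ∃ c : Fin d → ℝ, f = ∑ i, c i • b i

/-- The linear space `S` has dimension at least `d`. -/
def DimGE (S : Set (ℝ × ℝ → ℝ)) (d : ℕ) : Prop :=
  ∃ b : Fin d → (ℝ × ℝ → ℝ), (∀ i, b i ∈ S) ∧ LinearIndependent ℝ b

/-- The set of functions `S`, regarded as a space of functions on `Ω` (i.e. modulo the
values outside `Ω`), has dimension `d`. -/
def HasDimOn (Ω : Set (ℝ × ℝ)) (S : Set (ℝ × ℝ → ℝ)) (d : ℕ) : Prop :=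
  ∃ b : Fin d → (ℝ × ℝ → ℝ), (∀ i, b i ∈ S) ∧
    LinearIndependent ℝ (fun i => Ω.restrict (b i)) ∧
    ∀ f ∈ S, ∃ c : Fin d → ℝ, Set.EqOn f (∑ i, c i • b i) Ω

/-! The integration operator `I` and one-sided limits. -/

/-- `I(g)(x,y) = ∫_{-∞}^x ∫_{-∞}^y g(s,t) dt ds`. -/
def Ig (g : ℝ × ℝ → ℝ) : ℝ × ℝ → ℝ :=
  fun p => ∫ s in Set.Iic p.1, (∫ t in Set.Iic p.2, g (s, t))

/-- `g(s, y−)`, the one-sided limit from below in the second variable. -/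
def limBelowY (g : ℝ × ℝ → ℝ) (y s : ℝ) : ℝ := limUnder (𝓝[<] y) fun t => g (s, t)
/-- `g(s, y+)`. -/
def limAboveY (g : ℝ × ℝ → ℝ) (y s : ℝ) : ℝ := limUnder (𝓝[>] y) fun t => g (s, t)
/-- `g(x−, t)`. -/
def limLeftX (g : ℝ × ℝ → ℝ) (x t : ℝ) : ℝ := limUnder (𝓝[<] x) fun s => g (s, t)
/-- `g(x+, t)`. -/
def limRightX (g : ℝ × ℝ → ℝ) (x t : ℝ) : ℝ := limUnder (𝓝[>] x) fun s => g (s, t)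

/-- The (cell-wise) partial derivative in `x`. -/
def pdX (f : ℝ × ℝ → ℝ) : ℝ × ℝ → ℝ := fun p => deriv (fun x => f (x, p.2)) p.1
/-- The (cell-wise) partial derivative in `y`. -/
def pdY (f : ℝ × ℝ → ℝ) : ℝ × ℝ → ℝ := fun p => deriv (fun y => f (p.1, y)) p.2

/-- The union of the open interiors of the cells. -/
def cellInteriors (T : TMesh) : Set (ℝ × ℝ) := ⋃ c ∈ T.cells, interior c.toSet

open Classical in
/-- The cell-wise mixed partial derivative `∂²f/∂x∂y`, set to `0` off the cell interiors. -/
def Dmix (T : TMesh) (f : ℝ × ℝ → ℝ) : ℝ × ℝ → ℝ :=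
  fun p => if p ∈ cellInteriors T then pdX (pdY f) p else 0

/-! Extended T-meshes. -/

/-- The skeleton of a tensor-product mesh with grid lines `X 0 < ⋯ < X (2m+1)` and
`Y 0 < ⋯ < Y (2n+1)`. -/
def gridSkeleton (m n : ℕ) (X Y : ℕ → ℝ) : Set (ℝ × ℝ) :=
  {p : ℝ × ℝ | (∃ i ≤ 2 * m + 1, p.1 = X i) ∧ Y 0 ≤ p.2 ∧ p.2 ≤ Y (2 * n + 1)} ∪
  {p : ℝ × ℝ | (∃ j ≤ 2 * n + 1, p.2 = Y j) ∧ X 0 ≤ p.1 ∧ p.1 ≤ X (2 * m + 1)}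

/-- The straight extensions, up to the rectangle `[x0,x1] × [y0,y1]`, of every l-edge of `T`
having an endpoint on the boundary of the region of `T`. -/
def extSegs (T : TMesh) (x0 x1 y0 y1 : ℝ) : Set (ℝ × ℝ) :=
  {p : ℝ × ℝ | ∃ a b y, HorizLEdgeAt T a b y ∧ a = T.outer.xmin ∧
      p.2 = y ∧ x0 ≤ p.1 ∧ p.1 ≤ a} ∪
  {p : ℝ × ℝ | ∃ a b y, HorizLEdgeAt T a b y ∧ b = T.outer.xmax ∧
      p.2 = y ∧ b ≤ p.1 ∧ p.1 ≤ x1} ∪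
  {p : ℝ × ℝ | ∃ x a b, a < b ∧ IsLEdge T (({x} : Set ℝ) ×ˢ Set.Icc a b) ∧ a = T.outer.ymin ∧
      p.1 = x ∧ y0 ≤ p.2 ∧ p.2 ≤ a} ∪
  {p : ℝ × ℝ | ∃ x a b, a < b ∧ IsLEdge T (({x} : Set ℝ) ×ˢ Set.Icc a b) ∧ b = T.outer.ymax ∧
      p.1 = x ∧ b ≤ p.2 ∧ p.2 ≤ y1}

/-- `Te` is an extension of `T` associated with `S(m,n,m-1,n-1,T)`: a tensor-product mesh with
`2(m+1)` vertical and `2(n+1)` horizontal grid lines whose central rectangle is the region of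
`T`, together with `T` and the straight extensions of all boundary-reaching edges of `T`. -/
def IsExtensionOf (m n : ℕ) (T Te : TMesh) : Prop :=
  ∃ X Y : ℕ → ℝ,
    (∀ i < 2 * m + 1, X i < X (i + 1)) ∧ (∀ j < 2 * n + 1, Y j < Y (j + 1)) ∧
    X m = T.outer.xmin ∧ X (m + 1) = T.outer.xmax ∧
    Y n = T.outer.ymin ∧ Y (n + 1) = T.outer.ymax ∧
    Te.outer.xmin = X 0 ∧ Te.outer.xmax = X (2 * m + 1) ∧
    Te.outer.ymin = Y 0 ∧ Te.outer.ymax = Y (2 * n + 1) ∧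
    Te.skeleton = T.skeleton ∪ gridSkeleton m n X Y ∪
      extSegs T (X 0) (X (2 * m + 1)) (Y 0) (Y (2 * n + 1))

/-! Hierarchical T-meshes. -/

/-- `T` is a tensor-product mesh. -/
def IsTensorMesh (T : TMesh) : Prop :=
  ∃ (p q : ℕ) (x y : ℕ → ℝ), 0 < p ∧ 0 < q ∧
    (∀ i < p, x i < x (i + 1)) ∧ (∀ j < q, y j < y (j + 1)) ∧
    T.cells = {c : Rect | ∃ i < p, ∃ j < q,
      c.xmin = x i ∧ c.xmax = x (i + 1) ∧ c.ymin = y j ∧ c.ymax = y (j + 1)}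

/-- The four equal subcells obtained by subdividing a cell by the two segments joining the
midpoints of opposite edges. -/
def Rect.quads (c : Rect) : Set Rect :=
  { ⟨c.xmin, (c.xmin + c.xmax) / 2, c.ymin, (c.ymin + c.ymax) / 2,
      by linarith [c.hx], by linarith [c.hy]⟩,
    ⟨(c.xmin + c.xmax) / 2, c.xmax, c.ymin, (c.ymin + c.ymax) / 2,
      by linarith [c.hx], by linarith [c.hy]⟩,
    ⟨c.xmin, (c.xmin + c.xmax) / 2, (c.ymin + c.ymax) / 2, c.ymax,
      by linarith [c.hx], by linarith [c.hy]⟩,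
    ⟨(c.xmin + c.xmax) / 2, c.xmax, (c.ymin + c.ymax) / 2, c.ymax,
      by linarith [c.hx], by linarith [c.hy]⟩ }

/-- `T'` is obtained from `T` by subdividing exactly the cells in `S` into four quadrants. -/
def StepSubdiv (T T' : TMesh) (S : Set Rect) : Prop :=
  S ⊆ T.cells ∧ T'.outer = T.outer ∧
    T'.cells = (T.cells \ S) ∪ ⋃ c ∈ S, Rect.quads c

/-- A hierarchical T-mesh: the recursive construction `𝒯⁰, 𝒯¹, …, 𝒯^M`. -/
structure HierMesh where
  M : ℕ
  level : ℕ → TMesh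
  subdivided : ℕ → Set Rect
  tensor0 : IsTensorMesh (level 0)
  step : ∀ k < M, StepSubdiv (level k) (level (k + 1)) (subdivided k)

/-- The final mesh `𝒯 = 𝒯^M`. -/
def HierMesh.final (H : HierMesh) : TMesh := H.level H.M

/-- Two cells share a (horizontal or vertical) edge segment of positive length. -/
def EdgeAdjacent (c d : Rect) : Prop :=
  c ≠ d ∧ ∃ s : Set (ℝ × ℝ), (IsHorizSeg s ∨ IsVertSeg s) ∧ s ⊆ c.toSet ∩ d.toSet

/-- `c` is an isolated subdivided cell at step `k`: it is subdivided at step `k`, but no cell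
of the level-`k` mesh sharing a horizontal or vertical edge with it is subdivided then. -/
def IsIsolatedAt (H : HierMesh) (k : ℕ) (c : Rect) : Prop :=
  k < H.M ∧ c ∈ H.subdivided k ∧
    ∀ d ∈ (H.level k).cells, EdgeAdjacent c d → d ∉ H.subdivided k

/-- The isolated subdivided cells occurring in the construction of `H`. -/
def isoCells (H : HierMesh) : Set Rect := {c | ∃ k, IsIsolatedAt H k c}

/-- A regular T-mesh is crossing-vertex connected: any two distinct crossing vertices are
joined by a poly-line of axis-parallel mesh edges all of whose (corner) joints are crossing
vertices. -/
def IsCVConnected (T : TMesh) : Prop :=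
  ∀ u v : ℝ × ℝ, IsCrossingVertex T u → IsCrossingVertex T v → u ≠ v →
    ∃ (N : ℕ) (p : ℕ → ℝ × ℝ), p 0 = u ∧ p N = v ∧
      (∀ i < N, p i ≠ p (i + 1) ∧ segment ℝ (p i) (p (i + 1)) ⊆ T.skeleton ∧
        ((p i).1 = (p (i + 1)).1 ∨ (p i).2 = (p (i + 1)).2)) ∧
      (∀ i, 0 < i → i < N →
        (((p (i - 1)).2 = (p i).2 ∧ (p i).1 = (p (i + 1)).1) ∨
         ((p (i - 1)).1 = (p i).1 ∧ (p i).2 = (p (i + 1)).2)) →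
        IsCrossingVertex T (p i))

/-- The level of an l-edge `s`: the first level of the hierarchy whose skeleton contains it. -/
def LEdgeLevel (H : HierMesh) (s : Set (ℝ × ℝ)) (k : ℕ) : Prop :=
  s ⊆ (H.level k).skeleton ∧ ∀ j < k, ¬ s ⊆ (H.level j).skeleton

/-- `yb < yi < yt` are the heights of the two support l-edges of the horizontal l-edge
`[a,b] × {yi}` of the hierarchical mesh `H`: for a level-0 l-edge, the nearest level-0
horizontal l-edges below and above; for a level-`(k+1)` l-edge, the heights of the bottom
and top edges of a cell subdivided at step `k` whose inserted cross has its horizontal arm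
on the l-edge. -/
def SupportHeights (H : HierMesh) (a b yi yb yt : ℝ) : Prop :=
  yb < yi ∧ yi < yt ∧
  ((LEdgeLevel H (Set.Icc a b ×ˢ ({yi} : Set ℝ)) 0 ∧
     (∃ a' b', HorizLEdgeAt (H.level 0) a' b' yb) ∧
     (∃ a' b', HorizLEdgeAt (H.level 0) a' b' yt) ∧
     (∀ y a' b', HorizLEdgeAt (H.level 0) a' b' y → ¬(yb < y ∧ y < yt ∧ y ≠ yi))) ∨
   (∃ k, LEdgeLevel H (Set.Icc a b ×ˢ ({yi} : Set ℝ)) (k + 1) ∧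
     ∃ c ∈ H.subdivided k, c.ymin = yb ∧ c.ymax = yt ∧ (c.ymin + c.ymax) / 2 = yi ∧
       a ≤ c.xmin ∧ c.xmax ≤ b))

/-- `U j` is a proper submesh of `U i` (its region is strictly contained in that of `U i`). -/
def ProperSubmesh {ι : Type*} (U : ι → TMesh) (j i : ι) : Prop :=
  j ≠ i ∧ (U j).Omega ⊆ (U i).Omega ∧ (U j).Omega ≠ (U i).Omega

/-! The CVR graph. -/

/-- An edge of the CVR graph: a segment joining two consecutive crossing vertices along an
l-edge. -/
def IsCVREdge (T : TMesh) (s : Set (ℝ × ℝ)) : Prop :=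
  ∃ u v : ℝ × ℝ, u ≠ v ∧ s = segment ℝ u v ∧ IsCrossingVertex T u ∧ IsCrossingVertex T v ∧
    (∃ l, IsLEdge T l ∧ segment ℝ u v ⊆ l) ∧
    ∀ w ∈ segment ℝ u v, IsCrossingVertex T w → w = u ∨ w = v

/-- The union of the edges of the CVR graph, as a plane set. -/
def cvrGraphSet (T : TMesh) : Set (ℝ × ℝ) := ⋃₀ {s | IsCVREdge T s}

/-- The number of edges of the CVR graph. -/
def cvrEdgeCount (T : TMesh) : ℕ := {s | IsCVREdge T s}.ncard

/-- The number of bounded faces of the CVR graph: bounded connected components of the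
complement of the union of its edges. -/
def cvrFaceCount (T : TMesh) : ℕ :=
  {U : Set (ℝ × ℝ) | (∃ p ∈ (cvrGraphSet T)ᶜ, U = connectedComponentIn (cvrGraphSet T)ᶜ p) ∧
     Bornology.IsBounded U}.ncard
lemma rect_closed (c : Rect) : IsClosed c.toSet :=
  isClosed_Icc.prod isClosed_Icc

lemma mem_rect {c : Rect} {p : ℝ × ℝ} :
    p ∈ c.toSet ↔ (c.xmin ≤ p.1 ∧ p.1 ≤ c.xmax) ∧ (c.ymin ≤ p.2 ∧ p.2 ≤ c.ymax) := by
  rw [Rect.toSet, Set.mem_prod, Set.mem_Icc, Set.mem_Icc]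

lemma rect_interior (c : Rect) :
    interior c.toSet = Ioo c.xmin c.xmax ×ˢ Ioo c.ymin c.ymax := by
  rw [Rect.toSet, interior_prod_eq, interior_Icc, interior_Icc]

lemma rect_frontier_iff {c : Rect} {p : ℝ × ℝ} :
    p ∈ frontier c.toSet ↔
      p ∈ c.toSet ∧ (p.1 = c.xmin ∨ p.1 = c.xmax ∨ p.2 = c.ymin ∨ p.2 = c.ymax) := by
  rw [Rect.toSet, frontier_prod_eq, closure_Icc, closure_Icc,
    frontier_Icc c.hx.le, frontier_Icc c.hy.le]
  constructor
  · rintro (⟨h1, h2⟩ | ⟨h1, h2⟩)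
    · rcases h2 with h2 | h2
      · exact ⟨⟨h1, by rw [h2]; exact ⟨le_refl _, c.hy.le⟩⟩, Or.inr (Or.inr (Or.inl h2))⟩
      · exact ⟨⟨h1, by rw [h2]; exact ⟨c.hy.le, le_refl _⟩⟩, Or.inr (Or.inr (Or.inr h2))⟩
    · rcases h1 with h1 | h1
      · exact ⟨⟨by rw [h1]; exact ⟨le_refl _, c.hx.le⟩, h2⟩, Or.inl h1⟩
      · exact ⟨⟨by rw [h1]; exact ⟨c.hx.le, le_refl _⟩, h2⟩, Or.inr (Or.inl h1)⟩
  · rintro ⟨⟨h1, h2⟩, h | h | h | h⟩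
    · exact Or.inr ⟨Or.inl h, h2⟩
    · exact Or.inr ⟨Or.inr h, h2⟩
    · exact Or.inl ⟨h1, Or.inl h⟩
    · exact Or.inl ⟨h1, Or.inr h⟩

lemma mem_interior_rect {c : Rect} {p : ℝ × ℝ} (hp : p ∈ c.toSet) (hfr : p ∉ frontier c.toSet) :
    c.xmin < p.1 ∧ p.1 < c.xmax ∧ c.ymin < p.2 ∧ p.2 < c.ymax := by
  rw [rect_frontier_iff] at hfr
  push_neg at hfr
  obtain ⟨h1, h2, h3, h4⟩ := hfr hp
  rw [mem_rect] at hp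
  exact ⟨lt_of_le_of_ne hp.1.1 (Ne.symm h1), lt_of_le_of_ne hp.1.2 h2,
    lt_of_le_of_ne hp.2.1 (Ne.symm h3), lt_of_le_of_ne hp.2.2 h4⟩

lemma mem_interior_rect_iff {c : Rect} {p : ℝ × ℝ} :
    p ∈ interior c.toSet ↔ (c.xmin < p.1 ∧ p.1 < c.xmax) ∧ (c.ymin < p.2 ∧ p.2 < c.ymax) := by
  rw [rect_interior]; simp [Set.mem_prod, Set.mem_Ioo]

lemma skeleton_closed (T : TMesh) : IsClosed T.skeleton :=
  T.finite_cells.isClosed_biUnion fun _ _ => isClosed_frontier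

lemma frontier_subset_skeleton (T : TMesh) {c : Rect} (hc : c ∈ T.cells) :
    frontier c.toSet ⊆ T.skeleton := fun p hp => Set.mem_biUnion hc hp

lemma cell_subset_Omega (T : TMesh) {c : Rect} (hc : c ∈ T.cells) : c.toSet ⊆ T.Omega := by
  intro p hp
  rw [TMesh.Omega, ← T.union_eq]
  exact Set.mem_biUnion hc hp

lemma skeleton_subset_Omega (T : TMesh) : T.skeleton ⊆ T.Omega := by
  intro p hp
  rw [TMesh.skeleton, Set.mem_iUnion₂] at hp
  obtain ⟨c, hc, h⟩ := hp
  exact cell_subset_Omega T hc ((rect_closed c).frontier_subset h)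

lemma mem_cell_of_mem_Omega (T : TMesh) {p : ℝ × ℝ} (hp : p ∈ T.Omega) :
    ∃ c ∈ T.cells, p ∈ c.toSet := by
  rw [TMesh.Omega, ← T.union_eq] at hp
  simpa using Set.mem_iUnion₂.mp hp

lemma interior_disjoint_skeleton (T : TMesh) {d : Rect} (hd : d ∈ T.cells) {p : ℝ × ℝ}
    (hp : p ∈ interior d.toSet) (hs : p ∈ T.skeleton) : False := by
  rw [TMesh.skeleton, Set.mem_iUnion₂] at hs
  obtain ⟨c, hc, hfc⟩ := hs
  by_cases hcd : c = d
  · subst hcd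
    rw [frontier, ((rect_closed c).closure_eq)] at hfc
    exact hfc.2 hp
  · have hcc : c.toSet = closure (interior c.toSet) := by
      rw [rect_interior, closure_prod_eq, closure_Ioo c.hx.ne, closure_Ioo c.hy.ne, Rect.toSet]
    have hpc : p ∈ closure (interior c.toSet) := by
      rw [← hcc]; exact (rect_closed c).frontier_subset hfc
    obtain ⟨q, hq1, hq2⟩ := mem_closure_iff.mp hpc (interior d.toSet) isOpen_interior hp
    exact Set.disjoint_left.mp (T.pairwise_disjoint hc hd hcd) hq2 hq1

lemma mem_interior_cell_of_not_skeleton (T : TMesh) {p : ℝ × ℝ} (hp : p ∈ T.Omega)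
    (hs : p ∉ T.skeleton) :
    ∃ d ∈ T.cells, d.xmin < p.1 ∧ p.1 < d.xmax ∧ d.ymin < p.2 ∧ p.2 < d.ymax := by
  obtain ⟨d, hd, hpd⟩ := mem_cell_of_mem_Omega T hp
  have : p ∉ frontier d.toSet := fun h => hs (frontier_subset_skeleton T hd h)
  obtain ⟨h1, h2, h3, h4⟩ := mem_interior_rect hpd this
  exact ⟨d, hd, h1, h2, h3, h4⟩
lemma mem_horiz_seg {a b y : ℝ} {u v : ℝ} :
    (u, v) ∈ Set.Icc a b ×ˢ ({y} : Set ℝ) ↔ (a ≤ u ∧ u ≤ b) ∧ v = y := by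
  rw [Set.mem_prod]; simp [Set.mem_Icc]

lemma skeleton_x_bounds (T : TMesh) {x y : ℝ} (h : (x, y) ∈ T.skeleton) :
    T.outer.xmin ≤ x ∧ x ≤ T.outer.xmax ∧ T.outer.ymin ≤ y ∧ y ≤ T.outer.ymax := by
  have := mem_rect.mp (skeleton_subset_Omega T h)
  exact ⟨this.1.1, this.1.2, this.2.1, this.2.2⟩

lemma exists_maximal_horiz (T : TMesh) {p q y : ℝ} (hpq : p < q)
    (hsub : Set.Icc p q ×ˢ ({y} : Set ℝ) ⊆ T.skeleton) :
    ∃ a b, a ≤ p ∧ q ≤ b ∧ HorizLEdgeAt T a b y := by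
  set X : Set ℝ := {x : ℝ | (x, y) ∈ T.skeleton} with hX
  have hXc : IsClosed X := by
    have : Continuous (fun x : ℝ => (x, y)) := by fun_prop
    exact (skeleton_closed T).preimage this
  have hXp : ∀ x, p ≤ x → x ≤ q → x ∈ X := fun x h1 h2 =>
    hsub (mem_horiz_seg.mpr ⟨⟨h1, h2⟩, rfl⟩)
  set A : Set ℝ := {x | x ≤ p ∧ Set.Icc x p ⊆ X} with hA
  set B : Set ℝ := {x | q ≤ x ∧ Set.Icc q x ⊆ X} with hB
  have hpA : p ∈ A := by
    refine ⟨le_refl _, fun x hx => ?_⟩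
    have : x = p := le_antisymm hx.2 hx.1
    exact this ▸ hXp p (le_refl _) hpq.le
  have hqB : q ∈ B := by
    refine ⟨le_refl _, fun x hx => ?_⟩
    have : x = q := le_antisymm hx.2 hx.1
    exact this ▸ hXp q hpq.le (le_refl _)
  have hAX : A ⊆ X := fun x hx => hx.2 ⟨le_refl _, hx.1⟩
  have hBX : B ⊆ X := fun x hx => hx.2 ⟨hx.1, le_refl _⟩
  have hAbdd : BddBelow A := ⟨T.outer.xmin, fun x hx => (skeleton_x_bounds T (hAX hx)).1⟩
  have hBbdd : BddAbove B := ⟨T.outer.xmax, fun x hx => (skeleton_x_bounds T (hBX hx)).2.1⟩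
  set a := sInf A with ha
  set b := sSup B with hb
  have hap : a ≤ p := csInf_le hAbdd hpA
  have hqb : q ≤ b := le_csSup hBbdd hqB
  have haX : a ∈ X := by
    have h1 : a ∈ closure A := csInf_mem_closure ⟨p, hpA⟩ hAbdd
    exact hXc.closure_eq ▸ (closure_mono hAX h1)
  have hbX : b ∈ X := by
    have h1 : b ∈ closure B := csSup_mem_closure ⟨q, hqB⟩ hBbdd
    exact hXc.closure_eq ▸ (closure_mono hBX h1)
  have hIccap : Set.Icc a p ⊆ X := by
    intro x hx
    rcases eq_or_lt_of_le hx.1 with h | h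
    · exact h ▸ haX
    · obtain ⟨x', hx'A, hx'lt⟩ := (csInf_lt_iff hAbdd ⟨p, hpA⟩).mp h
      exact hx'A.2 ⟨hx'lt.le, hx.2⟩
  have hIccqb : Set.Icc q b ⊆ X := by
    intro x hx
    rcases eq_or_lt_of_le hx.2 with h | h
    · exact h ▸ hbX
    · obtain ⟨x', hx'B, hx'lt⟩ := (lt_csSup_iff hBbdd ⟨q, hqB⟩).mp h
      exact hx'B.2 ⟨hx.1, hx'lt.le⟩
  have hIccab : ∀ x, a ≤ x → x ≤ b → x ∈ X := by
    intro x h1 h2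
    rcases le_total x p with h | h
    · exact hIccap ⟨h1, h⟩
    · rcases le_total x q with h' | h'
      · exact hXp x h h'
      · exact hIccqb ⟨h', h2⟩
  have hab : a < b := lt_of_le_of_lt hap (lt_of_lt_of_le hpq hqb)
  refine ⟨a, b, hap, hqb, hab, Or.inl ⟨a, b, y, hab, rfl⟩, ?_, ?_⟩
  · rintro ⟨u, v⟩ hu
    obtain ⟨⟨h1, h2⟩, h3⟩ := mem_horiz_seg.mp hu
    exact h3 ▸ hIccab u h1 h2
  · intro s' hseg hsub' hss
    rcases hseg with ⟨α, β, y', hαβ, rfl⟩ | ⟨x', α, β, hαβ, rfl⟩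
    · have hmema : ((a : ℝ), y) ∈ Set.Icc α β ×ˢ ({y'} : Set ℝ) :=
        hss (mem_horiz_seg.mpr ⟨⟨le_refl _, hab.le⟩, rfl⟩)
      have hmemb : ((b : ℝ), y) ∈ Set.Icc α β ×ˢ ({y'} : Set ℝ) :=
        hss (mem_horiz_seg.mpr ⟨⟨hab.le, le_refl _⟩, rfl⟩)
      obtain ⟨⟨ha1, _⟩, hyy⟩ := mem_horiz_seg.mp hmema
      obtain ⟨⟨_, hb2⟩, _⟩ := mem_horiz_seg.mp hmemb
      subst hyy
      have hXs' : ∀ x, α ≤ x → x ≤ β → x ∈ X := fun x h1 h2 =>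
        hsub' (mem_horiz_seg.mpr ⟨⟨h1, h2⟩, rfl⟩)
      have hαA : α ∈ A :=
        ⟨ha1.trans hap, fun x hx => hXs' x hx.1 (hx.2.trans (hpq.le.trans (hqb.trans hb2)))⟩
      have hβB : β ∈ B := by
        refine ⟨hqb.trans hb2, fun x hx => ?_⟩
        exact hXs' x (((ha1.trans hap).trans hpq.le).trans hx.1) hx.2
      have hαa : α = a := le_antisymm ha1 (csInf_le hAbdd hαA)
      have hβb : β = b := le_antisymm (le_csSup hBbdd hβB) hb2
      rw [hαa, hβb]
    · have hmema : ((a : ℝ), y) ∈ ({x'} : Set ℝ) ×ˢ Set.Icc α β :=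
        hss (mem_horiz_seg.mpr ⟨⟨le_refl _, hab.le⟩, rfl⟩)
      have hmemb : ((b : ℝ), y) ∈ ({x'} : Set ℝ) ×ˢ Set.Icc α β :=
        hss (mem_horiz_seg.mpr ⟨⟨hab.le, le_refl _⟩, rfl⟩)
      rw [Set.mem_prod] at hmema hmemb
      have : a = x' := hmema.1
      have : b = x' := hmemb.1
      exact absurd (hmema.1.trans hmemb.1.symm) hab.ne

lemma Icc_prod_singleton_inj {a b a' b' y : ℝ} (hab : a ≤ b) (hab' : a' ≤ b')
    (h : Set.Icc a b ×ˢ ({y} : Set ℝ) = Set.Icc a' b' ×ˢ ({y} : Set ℝ)) :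
    a = a' ∧ b = b' := by
  have hIcc : Set.Icc a b = Set.Icc a' b' := by
    ext u
    constructor <;> intro hu
    · have : ((u : ℝ), y) ∈ Set.Icc a' b' ×ˢ ({y} : Set ℝ) := by
        rw [← h]; exact mem_horiz_seg.mpr ⟨⟨hu.1, hu.2⟩, rfl⟩
      exact ⟨(mem_horiz_seg.mp this).1.1, (mem_horiz_seg.mp this).1.2⟩
    · have : ((u : ℝ), y) ∈ Set.Icc a b ×ˢ ({y} : Set ℝ) := by
        rw [h]; exact mem_horiz_seg.mpr ⟨⟨hu.1, hu.2⟩, rfl⟩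
      exact ⟨(mem_horiz_seg.mp this).1.1, (mem_horiz_seg.mp this).1.2⟩
  have h1 : a ∈ Set.Icc a' b' := hIcc ▸ Set.mem_Icc.mpr ⟨le_refl _, hab⟩
  have h2 : a' ∈ Set.Icc a b := hIcc ▸ Set.mem_Icc.mpr ⟨le_refl _, hab'⟩
  have h3 : b ∈ Set.Icc a' b' := hIcc ▸ Set.mem_Icc.mpr ⟨hab, le_refl _⟩
  have h4 : b' ∈ Set.Icc a b := hIcc ▸ Set.mem_Icc.mpr ⟨hab', le_refl _⟩
  exact ⟨le_antisymm h2.1 h1.1, le_antisymm h3.2 h4.2⟩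


lemma horiz_edges_eq_of_common (T : TMesh) {a b a' b' y x : ℝ}
    (h1 : HorizLEdgeAt T a b y) (h2 : HorizLEdgeAt T a' b' y)
    (hx1 : a ≤ x ∧ x ≤ b) (hx2 : a' ≤ x ∧ x ≤ b') : a = a' ∧ b = b' := by
  set m := min a a' with hm
  set M := max b b' with hM
  have hcov : ∀ u, m ≤ u → u ≤ M → ((a ≤ u ∧ u ≤ b) ∨ (a' ≤ u ∧ u ≤ b')) := by
    intro u hu1 hu2
    rcases le_total u b with h | h
    · rcases le_total a u with h' | h'
      · exact Or.inl ⟨h', h⟩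
      · rcases min_cases a a' with ⟨he, _⟩ | ⟨he, hle⟩
        · exact Or.inl ⟨he ▸ hu1, h⟩
        · exact Or.inr ⟨he ▸ hu1, le_trans (le_trans h' hx1.1) hx2.2⟩
    · rcases max_cases b b' with ⟨he, hle⟩ | ⟨he, _⟩
      · exact Or.inl ⟨hx1.1.trans (hx1.2.trans h), he ▸ hu2⟩
      · exact Or.inr ⟨hx2.1.trans (hx1.2.trans h), he ▸ hu2⟩
  have hsub : Set.Icc m M ×ˢ ({y} : Set ℝ) ⊆ T.skeleton := by
    rintro ⟨u, v⟩ hu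
    obtain ⟨⟨hu1, hu2⟩, rfl⟩ := mem_horiz_seg.mp hu
    rcases hcov u hu1 hu2 with h | h
    · exact h1.2.2.1 (mem_horiz_seg.mpr ⟨h, rfl⟩)
    · exact h2.2.2.1 (mem_horiz_seg.mpr ⟨h, rfl⟩)
  have hmM : m < M := lt_of_le_of_lt (min_le_left _ _) (h1.1.trans_le (le_max_left _ _))
  have hseg : IsHorizSeg (Set.Icc m M ×ˢ ({y} : Set ℝ)) := ⟨m, M, y, hmM, rfl⟩
  have hsup1 : Set.Icc a b ×ˢ ({y} : Set ℝ) ⊆ Set.Icc m M ×ˢ ({y} : Set ℝ) :=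
    Set.prod_mono (Set.Icc_subset_Icc (min_le_left _ _) (le_max_left _ _)) (le_refl _)
  have hsup2 : Set.Icc a' b' ×ˢ ({y} : Set ℝ) ⊆ Set.Icc m M ×ˢ ({y} : Set ℝ) :=
    Set.prod_mono (Set.Icc_subset_Icc (min_le_right _ _) (le_max_right _ _)) (le_refl _)
  have he1 := h1.2.2.2 _ (Or.inl hseg) hsub hsup1
  have he2 := h2.2.2.2 _ (Or.inl hseg) hsub hsup2
  obtain ⟨e1a, e1b⟩ := Icc_prod_singleton_inj hmM.le h1.1.le he1
  obtain ⟨e2a, e2b⟩ := Icc_prod_singleton_inj hmM.le h2.1.le he2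
  exact ⟨e1a.symm.trans e2a, e1b.symm.trans e2b⟩

lemma cell_edge_horiz (T : TMesh) {d : Rect} (hd : d ∈ T.cells) {y : ℝ}
    (hy : y = d.ymin ∨ y = d.ymax) :
    ∃ a b, a ≤ d.xmin ∧ d.xmax ≤ b ∧ HorizLEdgeAt T a b y := by
  apply exists_maximal_horiz T d.hx
  rintro ⟨u, v⟩ hu
  obtain ⟨⟨hu1, hu2⟩, rfl⟩ := mem_horiz_seg.mp hu
  apply frontier_subset_skeleton T hd
  rw [rect_frontier_iff]
  constructor
  · rw [mem_rect]
    refine ⟨⟨hu1, hu2⟩, ?_⟩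
    rcases hy with h | h <;> rw [h]
    · exact ⟨le_refl _, d.hy.le⟩
    · exact ⟨d.hy.le, le_refl _⟩
  · rcases hy with h | h
    · exact Or.inr (Or.inr (Or.inl h))
    · exact Or.inr (Or.inr (Or.inr h))

lemma frontier_Omega_iff (T : TMesh) {p : ℝ × ℝ} :
    p ∈ frontier T.Omega ↔ p ∈ T.Omega ∧
      (p.1 = T.outer.xmin ∨ p.1 = T.outer.xmax ∨ p.2 = T.outer.ymin ∨ p.2 = T.outer.ymax) :=
  rect_frontier_iff

lemma interior_ledge_of_height (T : TMesh) {a b y : ℝ}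
    (h : HorizLEdgeAt T a b y) (h1 : T.outer.ymin < y) (h2 : y < T.outer.ymax) :
    IsInteriorLEdge T (Set.Icc a b ×ˢ ({y} : Set ℝ)) := by
  refine ⟨h.2, fun hsub => ?_⟩
  have hm : ((a + b) / 2, y) ∈ Set.Icc a b ×ˢ ({y} : Set ℝ) := by
    apply mem_horiz_seg.mpr
    constructor
    · constructor <;> [linarith [h.1]; linarith [h.1]]
    · rfl
  have := (frontier_Omega_iff T).mp (hsub hm)
  have hb1 := skeleton_x_bounds T (h.2.2.1 (mem_horiz_seg.mpr ⟨⟨le_refl _, h.1.le⟩, rfl⟩))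
  have hb2 := skeleton_x_bounds T (h.2.2.1 (mem_horiz_seg.mpr ⟨⟨h.1.le, le_refl _⟩, rfl⟩))
  rcases this.2 with hc | hc | hc | hc
  · simp only at hc; linarith [h.1, hb1.1]
  · simp only at hc; linarith [h.1, hb2.2.1]
  · simp only at hc; linarith
  · simp only at hc; linarith

lemma ledge_height_eq {T : TMesh} {a b y a' b' y' : ℝ} (hab' : a' ≤ b')
    (h : IsLEdge T (Set.Icc a b ×ˢ ({y} : Set ℝ)))
    (heq : Set.Icc a b ×ˢ ({y} : Set ℝ) = Set.Icc a' b' ×ˢ ({y'} : Set ℝ)) : y = y' := by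
  have : ((a' : ℝ), y') ∈ Set.Icc a b ×ˢ ({y} : Set ℝ) := by
    rw [heq]; exact mem_horiz_seg.mpr ⟨⟨le_refl _, hab'⟩, rfl⟩
  exact (mem_horiz_seg.mp this).2.symm
/-- `[u,v]` is a dyadic subinterval of `[R0,R1]`. -/
def DyIn (u v R0 R1 : ℝ) : Prop :=
  ∃ m t : ℕ, t < 2 ^ m ∧ u = R0 + t * ((R1 - R0) / 2 ^ m) ∧
    v = R0 + (t + 1) * ((R1 - R0) / 2 ^ m)

lemma DyIn.lt {u v R0 R1 : ℝ} (hR : R0 < R1) (h : DyIn u v R0 R1) : u < v := by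
  obtain ⟨m, t, _, hu, hv⟩ := h
  have h2 : (0:ℝ) < (R1 - R0) / 2 ^ m := div_pos (by linarith) (by positivity)
  rw [hu, hv]; nlinarith

lemma DyIn.bounds {u v R0 R1 : ℝ} (hR : R0 < R1) (h : DyIn u v R0 R1) :
    R0 ≤ u ∧ v ≤ R1 := by
  obtain ⟨m, t, ht, hu, hv⟩ := h
  have h2 : (0:ℝ) < (R1 - R0) / 2 ^ m := div_pos (by linarith) (by positivity)
  have h3 : ((t:ℝ) + 1) ≤ 2 ^ m := by
    have : (t:ℝ) + 1 ≤ (2:ℝ) ^ m := by exact_mod_cast Nat.succ_le_of_lt ht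
    exact this
  constructor
  · rw [hu]; nlinarith [mul_nonneg (Nat.cast_nonneg t) h2.le]
  · rw [hv]
    have : ((t:ℝ) + 1) * ((R1 - R0) / 2 ^ m) ≤ 2 ^ m * ((R1 - R0) / 2 ^ m) := by
      apply mul_le_mul_of_nonneg_right h3 h2.le
    have h4 : (2:ℝ) ^ m * ((R1 - R0) / 2 ^ m) = R1 - R0 := by
      field_simp
    linarith

lemma DyIn.whole (R0 R1 : ℝ) : DyIn R0 R1 R0 R1 := by
  refine ⟨0, 0, by norm_num, by norm_num, by norm_num⟩

lemma DyIn.lower {u v R0 R1 : ℝ} (h : DyIn u v R0 R1) : DyIn u ((u + v)/2) R0 R1 := by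
  obtain ⟨m, t, ht, hu, hv⟩ := h
  refine ⟨m + 1, 2 * t, ?_, ?_, ?_⟩
  · have : 2 ^ (m + 1) = 2 * 2 ^ m := by ring
    omega
  · rw [hu]; push_cast; field_simp; ring
  · rw [hu, hv]; push_cast; field_simp; ring

lemma DyIn.upper {u v R0 R1 : ℝ} (h : DyIn u v R0 R1) : DyIn ((u + v)/2) v R0 R1 := by
  obtain ⟨m, t, ht, hu, hv⟩ := h
  refine ⟨m + 1, 2 * t + 1, ?_, ?_, ?_⟩
  · have : 2 ^ (m + 1) = 2 * 2 ^ m := by ring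
    omega
  · rw [hu, hv]; push_cast; field_simp; ring
  · rw [hv]; push_cast; field_simp; ring

/-- Auxiliary: scale comparison version. -/
lemma DyIn_nested_aux {R0 R1 u v u' v' : ℝ} (hR : R0 < R1)
    {m t m' t' : ℕ} (hmm : m ≤ m')
    (ht : t < 2 ^ m) (hu : u = R0 + t * ((R1 - R0) / 2 ^ m))
    (hv : v = R0 + (t + 1) * ((R1 - R0) / 2 ^ m))
    (ht' : t' < 2 ^ m') (hu' : u' = R0 + t' * ((R1 - R0) / 2 ^ m'))
    (hv' : v' = R0 + (t' + 1) * ((R1 - R0) / 2 ^ m'))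
    {x : ℝ} (hx1 : u < x) (hx2 : x < v) (hx1' : u' < x) (hx2' : x < v') :
    u ≤ u' ∧ v' ≤ v := by
  set ε : ℝ := (R1 - R0) / 2 ^ m' with hε
  have hεpos : 0 < ε := by rw [hε]; exact div_pos (by linarith) (by positivity)
  set K : ℕ := 2 ^ (m' - m) with hK
  have hKpow : (2:ℝ) ^ m * (2:ℝ) ^ (m' - m) = 2 ^ m' := by
    rw [← pow_add]; congr 1; omega
  have hscale : (R1 - R0) / 2 ^ m = K * ε := by
    rw [hε, hK]
    push_cast
    field_simp
    nlinarith [hKpow]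
  set a : ℕ := t * K with ha
  have hua : u = R0 + a * ε := by rw [hu, hscale, ha]; push_cast; ring
  have hva : v = R0 + (a + K) * ε := by rw [hv, hscale, ha]; push_cast; ring
  -- integer comparisons
  have h1 : (a:ℝ) < t' + 1 := by
    have := hx1'  -- u' < x
    have h2 := hx2  -- x < v
    rw [hua] at hx1
    rw [hv'] at hx2'
    -- a ε < x - R0 < (t'+1) ε
    have hlt : (a:ℝ) * ε < ((t':ℝ) + 1) * ε := by
      rw [hu'] at hx1'
      nlinarith
    exact lt_of_mul_lt_mul_right hlt hεpos.le
  have h2 : (t':ℝ) < a + K := by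
    have hlt : (t':ℝ) * ε < ((a:ℝ) + K) * ε := by
      rw [hu'] at hx1'
      rw [hva] at hx2
      nlinarith
    exact lt_of_mul_lt_mul_right hlt hεpos.le
  have h1n : a ≤ t' := by exact_mod_cast Nat.lt_succ_iff.mp (by exact_mod_cast h1)
  have h2n : t' + 1 ≤ a + K := by
    have : t' < a + K := by exact_mod_cast h2
    omega
  constructor
  · rw [hua, hu']
    have : (a:ℝ) ≤ t' := by exact_mod_cast h1n
    nlinarith
  · rw [hva, hv']
    have : (t':ℝ) + 1 ≤ a + K := by exact_mod_cast h2n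
    nlinarith

lemma DyIn_nested {R0 R1 u v u' v' : ℝ} (hR : R0 < R1)
    (h1 : DyIn u v R0 R1) (h2 : DyIn u' v' R0 R1)
    {x : ℝ} (hx1 : u < x) (hx2 : x < v) (hx1' : u' < x) (hx2' : x < v') :
    (u ≤ u' ∧ v' ≤ v) ∨ (u' ≤ u ∧ v ≤ v') := by
  obtain ⟨m, t, ht, hu, hv⟩ := h1
  obtain ⟨m', t', ht', hu', hv'⟩ := h2
  rcases le_total m m' with h | h
  · exact Or.inl (DyIn_nested_aux hR h ht hu hv ht' hu' hv' hx1 hx2 hx1' hx2')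
  · exact Or.inr (DyIn_nested_aux hR h ht' hu' hv' ht hu hv hx1' hx2' hx1 hx2)

lemma DyIn_half {R0 R1 u v u' v' : ℝ} (hR : R0 < R1)
    (h1 : DyIn u v R0 R1) (h2 : DyIn u' v' R0 R1)
    (hsub1 : u ≤ u') (hsub2 : v' ≤ v) (hne : ¬(u = u' ∧ v = v')) :
    v' ≤ (u + v) / 2 ∨ (u + v) / 2 ≤ u' := by
  obtain ⟨m, t, ht, hu, hv⟩ := h1
  obtain ⟨m', t', ht', hu', hv'⟩ := h2
  have hmm : m ≤ m' := by
    by_contra hcon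
    push_neg at hcon
    -- then v' - u' > v - u, contradicting containment
    have hlen : v - u = (R1 - R0) / 2 ^ m := by rw [hu, hv]; ring
    have hlen' : v' - u' = (R1 - R0) / 2 ^ m' := by rw [hu', hv']; ring
    have : (R1 - R0) / 2 ^ m < (R1 - R0) / 2 ^ m' := by
      apply div_lt_div_of_pos_left (by linarith) (by positivity)
      exact_mod_cast pow_lt_pow_right₀ (by norm_num) hcon
    have hcl : v' - u' ≤ v - u := by linarith
    rw [hlen, hlen'] at hcl
    linarith
  set ε : ℝ := (R1 - R0) / 2 ^ m' with hε
  have hεpos : 0 < ε := by rw [hε]; exact div_pos (by linarith) (by positivity)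
  set K : ℕ := 2 ^ (m' - m) with hK
  have hKpow : (2:ℝ) ^ m * (2:ℝ) ^ (m' - m) = 2 ^ m' := by
    rw [← pow_add]; congr 1; omega
  have hscale : (R1 - R0) / 2 ^ m = K * ε := by
    rw [hε, hK]; push_cast; field_simp; nlinarith [hKpow]
  set a : ℕ := t * K with ha
  have hua : u = R0 + a * ε := by rw [hu, hscale, ha]; push_cast; ring
  have hva : v = R0 + (a + K) * ε := by rw [hv, hscale, ha]; push_cast; ring
  have h1n : a ≤ t' := by
    have : (a:ℝ) * ε ≤ (t':ℝ) * ε := by rw [hua] at hsub1; rw [hu'] at hsub1; linarith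
    have := le_of_mul_le_mul_right this hεpos
    exact_mod_cast this
  have h2n : t' + 1 ≤ a + K := by
    have : ((t':ℝ) + 1) * ε ≤ ((a:ℝ) + K) * ε := by
      rw [hva] at hsub2; rw [hv'] at hsub2; push_cast; push_cast at hsub2; linarith
    have := le_of_mul_le_mul_right this hεpos
    have : (t':ℝ) + 1 ≤ (a:ℝ) + K := by exact_mod_cast this
    exact_mod_cast this
  have hKne : m ≠ m' := by
    intro hcon
    apply hne
    subst hcon
    have hK1 : K = 1 := by rw [hK]; simp
    have hta : t' = a := by omega
    constructor
    · rw [hua, hu', hta]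
    · rw [hva, hv', hta, hK1]; push_cast; ring
  have hmlt : m < m' := lt_of_le_of_ne hmm hKne
  set K2 : ℕ := 2 ^ (m' - m - 1) with hK2
  have hKK : K = 2 * K2 := by
    rw [hK, hK2, ← pow_succ']
    congr 1; omega
  have hmid : (u + v) / 2 = R0 + ((a:ℝ) + K2) * ε := by
    rw [hua, hva, hKK]; push_cast; ring
  rcases le_or_gt (t' + 1) (a + K2) with h | h
  · left
    rw [hv', hmid]
    have : ((t':ℝ) + 1) ≤ (a:ℝ) + K2 := by exact_mod_cast h
    nlinarith
  · right
    rw [hu', hmid]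
    have : (a:ℝ) + K2 ≤ (t':ℝ) := by
      have : a + K2 ≤ t' := by omega
      exact_mod_cast this
    nlinarith

namespace Rect

def qLL (c : Rect) : Rect :=
  ⟨c.xmin, (c.xmin + c.xmax) / 2, c.ymin, (c.ymin + c.ymax) / 2,
    by linarith [c.hx], by linarith [c.hy]⟩

def qLR (c : Rect) : Rect :=
  ⟨(c.xmin + c.xmax) / 2, c.xmax, c.ymin, (c.ymin + c.ymax) / 2,
    by linarith [c.hx], by linarith [c.hy]⟩

def qUL (c : Rect) : Rect :=
  ⟨c.xmin, (c.xmin + c.xmax) / 2, (c.ymin + c.ymax) / 2, c.ymax,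
    by linarith [c.hx], by linarith [c.hy]⟩

def qUR (c : Rect) : Rect :=
  ⟨(c.xmin + c.xmax) / 2, c.xmax, (c.ymin + c.ymax) / 2, c.ymax,
    by linarith [c.hx], by linarith [c.hy]⟩

lemma qLL_mem (c : Rect) : c.qLL ∈ c.quads := by left; rfl
lemma qLR_mem (c : Rect) : c.qLR ∈ c.quads := by right; left; rfl
lemma qUL_mem (c : Rect) : c.qUL ∈ c.quads := by right; right; left; rfl
lemma qUR_mem (c : Rect) : c.qUR ∈ c.quads := by right; right; right; rfl

lemma quads_cases {c q : Rect} (hq : q ∈ c.quads) :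
    q = c.qLL ∨ q = c.qLR ∨ q = c.qUL ∨ q = c.qUR := by
  rcases hq with h | h | h | h
  · exact Or.inl h
  · exact Or.inr (Or.inl h)
  · exact Or.inr (Or.inr (Or.inl h))
  · exact Or.inr (Or.inr (Or.inr h))

end Rect

lemma frontier_subset_quads (c : Rect) :
    frontier c.toSet ⊆ ⋃ q ∈ Rect.quads c, frontier q.toSet := by
  intro p hp
  obtain ⟨hpc, hcase⟩ := rect_frontier_iff.mp hp
  rw [mem_rect] at hpc
  set mx := (c.xmin + c.xmax) / 2 with hmx
  set my := (c.ymin + c.ymax) / 2 with hmy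
  have hin : ∀ q : Rect, q ∈ c.quads → p ∈ frontier q.toSet →
      p ∈ ⋃ q ∈ Rect.quads c, frontier q.toSet := fun q hq hpq => Set.mem_biUnion hq hpq
  rcases hcase with h | h | h | h
  · rcases le_total p.2 my with h2 | h2
    · refine hin c.qLL c.qLL_mem (rect_frontier_iff.mpr ⟨?_, Or.inl h⟩)
      rw [mem_rect]
      exact ⟨⟨by rw [h]; simp [Rect.qLL], by rw [h]; simp [Rect.qLL]; linarith [c.hx]⟩,
        ⟨hpc.2.1, h2⟩⟩
    · refine hin c.qUL c.qUL_mem (rect_frontier_iff.mpr ⟨?_, Or.inl h⟩)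
      rw [mem_rect]
      exact ⟨⟨by rw [h]; simp [Rect.qUL], by rw [h]; simp [Rect.qUL]; linarith [c.hx]⟩,
        ⟨h2, hpc.2.2⟩⟩
  · rcases le_total p.2 my with h2 | h2
    · refine hin c.qLR c.qLR_mem (rect_frontier_iff.mpr ⟨?_, Or.inr (Or.inl h)⟩)
      rw [mem_rect]
      exact ⟨⟨by rw [h]; simp [Rect.qLR]; linarith [c.hx], by rw [h]; simp [Rect.qLR]⟩,
        ⟨hpc.2.1, h2⟩⟩
    · refine hin c.qUR c.qUR_mem (rect_frontier_iff.mpr ⟨?_, Or.inr (Or.inl h)⟩)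
      rw [mem_rect]
      exact ⟨⟨by rw [h]; simp [Rect.qUR]; linarith [c.hx], by rw [h]; simp [Rect.qUR]⟩,
        ⟨h2, hpc.2.2⟩⟩
  · rcases le_total p.1 mx with h2 | h2
    · refine hin c.qLL c.qLL_mem (rect_frontier_iff.mpr ⟨?_, Or.inr (Or.inr (Or.inl h))⟩)
      rw [mem_rect]
      exact ⟨⟨hpc.1.1, h2⟩, ⟨by rw [h]; simp [Rect.qLL], by rw [h]; simp [Rect.qLL]; linarith [c.hy]⟩⟩
    · refine hin c.qLR c.qLR_mem (rect_frontier_iff.mpr ⟨?_, Or.inr (Or.inr (Or.inl h))⟩)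
      rw [mem_rect]
      exact ⟨⟨h2, hpc.1.2⟩, ⟨by rw [h]; simp [Rect.qLR], by rw [h]; simp [Rect.qLR]; linarith [c.hy]⟩⟩
  · rcases le_total p.1 mx with h2 | h2
    · refine hin c.qUL c.qUL_mem (rect_frontier_iff.mpr ⟨?_, Or.inr (Or.inr (Or.inr h))⟩)
      rw [mem_rect]
      exact ⟨⟨hpc.1.1, h2⟩, ⟨by rw [h]; simp [Rect.qUL]; linarith [c.hy], by rw [h]; simp [Rect.qUL]⟩⟩
    · refine hin c.qUR c.qUR_mem (rect_frontier_iff.mpr ⟨?_, Or.inr (Or.inr (Or.inr h))⟩)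
      rw [mem_rect]
      exact ⟨⟨h2, hpc.1.2⟩, ⟨by rw [h]; simp [Rect.qUR]; linarith [c.hy], by rw [h]; simp [Rect.qUR]⟩⟩

lemma level_outer_eq (H : HierMesh) : ∀ k, k ≤ H.M → (H.level k).outer = (H.level 0).outer := by
  intro k
  induction k with
  | zero => intro _; rfl
  | succ n ih =>
      intro h
      have hs := H.step n (by omega)
      rw [hs.2.1, ih (by omega)]

lemma level_Omega_eq (H : HierMesh) {k : ℕ} (hk : k ≤ H.M) :
    (H.level k).Omega = H.final.Omega := by
  unfold TMesh.Omega HierMesh.final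
  rw [level_outer_eq H k hk, level_outer_eq H H.M (le_refl _)]

lemma cells_succ (H : HierMesh) {k : ℕ} (hk : k < H.M) :
    (H.level (k+1)).cells =
      ((H.level k).cells \ H.subdivided k) ∪ ⋃ c ∈ H.subdivided k, Rect.quads c :=
  (H.step k hk).2.2

lemma subdivided_subset (H : HierMesh) {k : ℕ} (hk : k < H.M) :
    H.subdivided k ⊆ (H.level k).cells := (H.step k hk).1

lemma skeleton_mono_succ (H : HierMesh) {k : ℕ} (hk : k < H.M) :
    (H.level k).skeleton ⊆ (H.level (k+1)).skeleton := by
  intro p hp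
  rw [TMesh.skeleton, Set.mem_iUnion₂] at hp
  obtain ⟨c, hc, hpc⟩ := hp
  by_cases hcS : c ∈ H.subdivided k
  · have h2 := frontier_subset_quads c hpc
    rw [Set.mem_iUnion₂] at h2
    obtain ⟨q, hq, hpq⟩ := h2
    refine Set.mem_biUnion (show q ∈ (H.level (k+1)).cells from ?_) hpq
    rw [cells_succ H hk]
    exact Or.inr (Set.mem_biUnion hcS hq)
  · refine Set.mem_biUnion (show c ∈ (H.level (k+1)).cells from ?_) hpc
    rw [cells_succ H hk]
    exact Or.inl ⟨hc, hcS⟩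

lemma skeleton_mono (H : HierMesh) {j k : ℕ} (hjk : j ≤ k) (hk : k ≤ H.M) :
    (H.level j).skeleton ⊆ (H.level k).skeleton := by
  induction k with
  | zero =>
      have : j = 0 := by omega
      subst this; exact subset_rfl
  | succ n ih =>
      rcases Nat.lt_or_ge j (n+1) with h | h
      · exact (ih (by omega) (by omega)).trans (skeleton_mono_succ H (by omega))
      · have : j = n + 1 := by omega
        subst this; exact subset_rfl

lemma skeleton_le_final (H : HierMesh) {k : ℕ} (hk : k ≤ H.M) :
    (H.level k).skeleton ⊆ H.final.skeleton := skeleton_mono H hk (le_refl _)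

lemma midline_subset_skeleton (H : HierMesh) {k : ℕ} (hk : k < H.M) {c : Rect}
    (hc : c ∈ H.subdivided k) :
    Set.Icc c.xmin c.xmax ×ˢ ({(c.ymin + c.ymax) / 2} : Set ℝ) ⊆ (H.level (k+1)).skeleton := by
  rintro ⟨u, v⟩ hu
  obtain ⟨⟨h1, h2⟩, rfl⟩ := mem_horiz_seg.mp hu
  have hmem : ∀ q : Rect, q ∈ c.quads → ((u, (c.ymin + c.ymax) / 2) : ℝ × ℝ) ∈ frontier q.toSet →
      ((u, (c.ymin + c.ymax) / 2) : ℝ × ℝ) ∈ (H.level (k+1)).skeleton := by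
    intro q hq hpq
    refine Set.mem_biUnion (show q ∈ (H.level (k+1)).cells from ?_) hpq
    rw [cells_succ H hk]
    exact Or.inr (Set.mem_biUnion hc hq)
  rcases le_total u ((c.xmin + c.xmax) / 2) with h | h
  · refine hmem c.qLL c.qLL_mem (rect_frontier_iff.mpr ⟨?_, ?_⟩)
    · rw [mem_rect]; constructor
      · exact ⟨h1, h⟩
      · simp [Rect.qLL]; linarith [c.hy]
    · right; right; right; rfl
  · refine hmem c.qLR c.qLR_mem (rect_frontier_iff.mpr ⟨?_, ?_⟩)
    · rw [mem_rect]; constructor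
      · exact ⟨h, h2⟩
      · simp [Rect.qLR]; linarith [c.hy]
    · right; right; right; rfl

lemma cells_dyadic (H : HierMesh) {p0 q0 : ℕ} {gx gy : ℕ → ℝ}
    (hcells : (H.level 0).cells = {c : Rect | ∃ i < p0, ∃ j < q0,
      c.xmin = gx i ∧ c.xmax = gx (i+1) ∧ c.ymin = gy j ∧ c.ymax = gy (j+1)}) :
    ∀ k, k ≤ H.M → ∀ c ∈ (H.level k).cells, ∃ r < q0, DyIn c.ymin c.ymax (gy r) (gy (r+1)) := by
  intro k
  induction k with
  | zero =>
      intro _ c hc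
      rw [hcells] at hc
      obtain ⟨i, hi, j, hj, _, _, h3, h4⟩ := hc
      refine ⟨j, hj, ?_⟩
      rw [h3, h4]
      exact DyIn.whole _ _
  | succ n ih =>
      intro hn c hc
      rw [cells_succ H (by omega)] at hc
      rcases hc with ⟨hold, _⟩ | hnew
      · exact ih (by omega) c hold
      · rw [Set.mem_iUnion₂] at hnew
        obtain ⟨c', hc', hq⟩ := hnew
        obtain ⟨r, hr, hdy⟩ := ih (by omega) c' (subdivided_subset H (by omega) hc')
        refine ⟨r, hr, ?_⟩
        rcases Rect.quads_cases hq with rfl | rfl | rfl | rfl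
        · exact hdy.lower
        · exact hdy.lower
        · exact hdy.upper
        · exact hdy.upper

lemma grid_lt {Y : ℕ → ℝ} {q : ℕ} (h : ∀ j < q, Y j < Y (j+1)) :
    ∀ {i j}, i < j → j ≤ q → Y i < Y j := by
  intro i j hij hjq
  induction j with
  | zero => omega
  | succ n ih =>
      rcases Nat.lt_or_ge i n with h' | h'
      · exact (ih h' (by omega)).trans (h n (by omega))
      · have : i = n := by omega
        subst this
        exact h i (by omega)

lemma grid_le {Y : ℕ → ℝ} {q : ℕ} (h : ∀ j < q, Y j < Y (j+1)) :
    ∀ {i j}, i ≤ j → j ≤ q → Y i ≤ Y j := by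
  intro i j hij hjq
  rcases eq_or_lt_of_le hij with rfl | h'
  · exact le_refl _
  · exact (grid_lt h h' hjq).le

lemma grid_index_lt {Y : ℕ → ℝ} {q : ℕ} (h : ∀ j < q, Y j < Y (j+1)) {i j : ℕ}
    (hi : i ≤ q) (hj : j ≤ q) (hY : Y i < Y j) : i < j := by
  by_contra hcon
  push_neg at hcon
  exact absurd hY (not_lt.mpr (grid_le h hcon hi))

lemma horiz_seg_cell (T : TMesh) {a b y : ℝ} (hab : a < b)
    (hsub : Set.Icc a b ×ˢ ({y} : Set ℝ) ⊆ T.skeleton) :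
    ∃ c ∈ T.cells, (y = c.ymin ∨ y = c.ymax) ∧
      ∃ x0, (a ≤ x0 ∧ x0 ≤ b) ∧ (c.xmin ≤ x0 ∧ x0 ≤ c.xmax) := by
  set S : Set (ℝ × ℝ) := (fun x : ℝ => (x, y)) '' Set.Icc a b with hS
  have hSsub : S ⊆ Set.Icc a b ×ˢ ({y} : Set ℝ) := by
    rintro p ⟨x, hx, rfl⟩
    exact mem_horiz_seg.mpr ⟨⟨hx.1, hx.2⟩, rfl⟩
  have hSinf : S.Infinite := by
    apply Set.Infinite.image
    · intro u _ v _ huv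
      exact congrArg Prod.fst huv
    · exact Set.Icc_infinite hab
  have hexc : ∃ c ∈ T.cells, (S ∩ frontier c.toSet).Infinite := by
    by_contra hcon
    push_neg at hcon
    have : S ⊆ ⋃ c ∈ T.cells, (S ∩ frontier c.toSet) := by
      intro p hp
      have := hsub (hSsub hp)
      rw [TMesh.skeleton, Set.mem_iUnion₂] at this
      obtain ⟨c, hc, hpc⟩ := this
      exact Set.mem_biUnion hc ⟨hp, hpc⟩
    exact hSinf (Set.Finite.subset (Set.Finite.biUnion T.finite_cells hcon) this)
  obtain ⟨c, hc, hinf⟩ := hexc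
  refine ⟨c, hc, ?_, ?_⟩
  · by_contra hcon
    push_neg at hcon
    apply hinf
    apply Set.Finite.subset (Set.Finite.insert ((c.xmin : ℝ), y) (Set.finite_singleton ((c.xmax : ℝ), y)))
    rintro p ⟨hpS, hpf⟩
    obtain ⟨x, hx, rfl⟩ := hpS
    obtain ⟨_, hcase⟩ := rect_frontier_iff.mp hpf
    simp only [Set.mem_insert_iff, Set.mem_singleton_iff, Prod.mk.injEq]
    rcases hcase with h | h | h | h
    · exact Or.inl ⟨h, trivial⟩
    · exact Or.inr ⟨h, trivial⟩
    · exact absurd h hcon.1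
    · exact absurd h hcon.2
  · obtain ⟨p, hpS, hpf⟩ := hinf.nonempty
    obtain ⟨x, hx, rfl⟩ := hpS
    have := mem_rect.mp (rect_frontier_iff.mp hpf).1
    exact ⟨x, ⟨hx.1, hx.2⟩, this.1⟩

section Tensor

variable (T0 : TMesh) {p0 q0 : ℕ} {gx gy : ℕ → ℝ}
  (hp0 : 0 < p0) (hq0 : 0 < q0)
  (hgx : ∀ i < p0, gx i < gx (i+1)) (hgy : ∀ j < q0, gy j < gy (j+1))
  (hcells : T0.cells = {c : Rect | ∃ i < p0, ∃ j < q0,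
      c.xmin = gx i ∧ c.xmax = gx (i+1) ∧ c.ymin = gy j ∧ c.ymax = gy (j+1)})

include hp0 hq0 hgx hgy hcells in
lemma tensor_cell_mem {i j : ℕ} (hi : i < p0) (hj : j < q0) :
    (⟨gx i, gx (i+1), gy j, gy (j+1), hgx i hi, hgy j hj⟩ : Rect) ∈ T0.cells := by
  rw [hcells]
  exact ⟨i, hi, j, hj, rfl, rfl, rfl, rfl⟩

include hp0 hq0 hgx hgy hcells in
lemma tensor_y_bounds : gy 0 = T0.outer.ymin ∧ gy q0 = T0.outer.ymax := by
  have hc00 := tensor_cell_mem T0 hp0 hq0 hgx hgy hcells hp0 hq0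
  have hcq := tensor_cell_mem T0 hp0 hq0 hgx hgy hcells hp0 (Nat.sub_lt hq0 one_pos)
  have h1 : T0.outer.ymin ≤ gy 0 := by
    have hmem : ((gx 0 : ℝ), gy 0) ∈
        (⟨gx 0, gx (0+1), gy 0, gy (0+1), hgx 0 hp0, hgy 0 hq0⟩ : Rect).toSet :=
      mem_rect.mpr ⟨⟨le_refl _, (hgx 0 hp0).le⟩, ⟨le_refl _, (hgy 0 hq0).le⟩⟩
    exact (mem_rect.mp (cell_subset_Omega T0 hc00 hmem)).2.1
  have h2 : gy (q0 - 1 + 1) ≤ T0.outer.ymax := by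
    have hmem : ((gx 0 : ℝ), gy (q0 - 1 + 1)) ∈
        (⟨gx 0, gx (0+1), gy (q0-1), gy (q0-1+1), hgx 0 hp0,
          hgy (q0-1) (Nat.sub_lt hq0 one_pos)⟩ : Rect).toSet :=
      mem_rect.mpr ⟨⟨le_refl _, (hgx 0 hp0).le⟩,
        ⟨(hgy (q0-1) (Nat.sub_lt hq0 one_pos)).le, le_refl _⟩⟩
    exact (mem_rect.mp (cell_subset_Omega T0 hcq hmem)).2.2
  have hq1 : q0 - 1 + 1 = q0 := by omega
  rw [hq1] at h2
  have h3 : gy 0 ≤ T0.outer.ymin := by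
    have hP : ((T0.outer.xmin : ℝ), T0.outer.ymin) ∈ T0.Omega :=
      mem_rect.mpr ⟨⟨le_refl _, T0.outer.hx.le⟩, ⟨le_refl _, T0.outer.hy.le⟩⟩
    obtain ⟨c, hc, hPc⟩ := mem_cell_of_mem_Omega T0 hP
    rw [hcells] at hc
    obtain ⟨i, hi, j, hj, _, _, h5, _⟩ := hc
    have := (mem_rect.mp hPc).2.1
    rw [h5] at this
    exact le_trans (grid_le hgy (Nat.zero_le j) hj.le) this
  have h4 : T0.outer.ymax ≤ gy q0 := by
    have hP : ((T0.outer.xmin : ℝ), T0.outer.ymax) ∈ T0.Omega :=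
      mem_rect.mpr ⟨⟨le_refl _, T0.outer.hx.le⟩, ⟨T0.outer.hy.le, le_refl _⟩⟩
    obtain ⟨c, hc, hPc⟩ := mem_cell_of_mem_Omega T0 hP
    rw [hcells] at hc
    obtain ⟨i, hi, j, hj, _, _, _, h6⟩ := hc
    have := (mem_rect.mp hPc).2.2
    rw [h6] at this
    exact le_trans this (grid_le hgy (by omega) (le_refl _))
  exact ⟨le_antisymm h3 h1, le_antisymm h2 h4⟩

include hp0 hq0 hgx hgy hcells in
lemma tensor_not_interior {c : Rect} (hc : c ∈ T0.cells) {m : ℕ} (hm : m ≤ q0) :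
    ¬ (c.ymin < gy m ∧ gy m < c.ymax) := by
  rintro ⟨h1, h2⟩
  rw [hcells] at hc
  obtain ⟨i, hi, j, hj, _, _, h5, h6⟩ := hc
  rw [h5] at h1
  rw [h6] at h2
  have hj1 : j < m := grid_index_lt hgy hj.le hm h1
  have hj2 : m < j + 1 := grid_index_lt hgy hm hj h2
  omega

include hp0 hq0 hgx hgy hcells in
lemma tensor_line_subset {m : ℕ} (hm : m ≤ q0) :
    Set.Icc T0.outer.xmin T0.outer.xmax ×ˢ ({gy m} : Set ℝ) ⊆ T0.skeleton := by
  obtain ⟨hy0, hyq⟩ := tensor_y_bounds T0 hp0 hq0 hgx hgy hcells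
  rintro ⟨u, v⟩ hu
  obtain ⟨⟨h1, h2⟩, rfl⟩ := mem_horiz_seg.mp hu
  have hmem : ((u : ℝ), gy m) ∈ T0.Omega := by
    rw [TMesh.Omega, mem_rect]
    exact ⟨⟨h1, h2⟩, ⟨hy0 ▸ grid_le hgy (Nat.zero_le m) hm,
      hyq ▸ grid_le hgy hm (le_refl _)⟩⟩
  obtain ⟨c, hc, hPc⟩ := mem_cell_of_mem_Omega T0 hmem
  have hni := tensor_not_interior T0 hp0 hq0 hgx hgy hcells hc hm
  have hmr := mem_rect.mp hPc
  apply frontier_subset_skeleton T0 hc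
  rw [rect_frontier_iff]
  refine ⟨hPc, ?_⟩
  rcases eq_or_lt_of_le hmr.2.1 with h | h
  · exact Or.inr (Or.inr (Or.inl h.symm))
  · rcases eq_or_lt_of_le hmr.2.2 with h' | h'
    · exact Or.inr (Or.inr (Or.inr h'))
    · exact absurd ⟨h, h'⟩ hni

include hp0 hq0 hgx hgy hcells in
lemma tensor_edge {m : ℕ} (hm : m ≤ q0) :
    HorizLEdgeAt T0 T0.outer.xmin T0.outer.xmax (gy m) := by
  obtain ⟨a, b, ha, hb, hedge⟩ := exists_maximal_horiz T0 T0.outer.hx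
    (tensor_line_subset T0 hp0 hq0 hgx hgy hcells hm)
  have hb1 := skeleton_x_bounds T0
    (hedge.2.2.1 (mem_horiz_seg.mpr ⟨⟨le_refl _, hedge.1.le⟩, rfl⟩))
  have hb2 := skeleton_x_bounds T0
    (hedge.2.2.1 (mem_horiz_seg.mpr ⟨⟨hedge.1.le, le_refl _⟩, rfl⟩))
  have hae : a = T0.outer.xmin := le_antisymm ha hb1.1
  have hbe : b = T0.outer.xmax := le_antisymm hb2.2.1 hb
  rw [← hae, ← hbe]
  exact hedge

include hp0 hq0 hgx hgy hcells in
lemma tensor_edge_height {a b y : ℝ} (h : HorizLEdgeAt T0 a b y) : ∃ m ≤ q0, y = gy m := by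
  obtain ⟨c, hc, hcase, _⟩ := horiz_seg_cell T0 h.1 h.2.2.1
  rw [hcells] at hc
  obtain ⟨i, hi, j, hj, _, _, h5, h6⟩ := hc
  rcases hcase with h' | h'
  · exact ⟨j, hj.le, h'.trans h5⟩
  · exact ⟨j + 1, hj, h'.trans h6⟩

end Tensor

lemma exists_ledge_level (H : HierMesh) {s : Set (ℝ × ℝ)} (hs : s ⊆ H.final.skeleton) :
    ∃ k, k ≤ H.M ∧ LEdgeLevel H s k := by
  classical
  have hex : ∃ k, s ⊆ (H.level k).skeleton := ⟨H.M, hs⟩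
  exact ⟨Nat.find hex, Nat.find_min' hex hs, Nat.find_spec hex,
    fun j hj => Nat.find_min hex hj⟩

lemma affine_of_degreeOf_le (p : MvPolynomial (Fin 2) ℝ) (hp : p.degreeOf 1 ≤ 1) (s y : ℝ) :
    MvPolynomial.eval ![s, y] p =
      MvPolynomial.eval ![s, 0] p +
        y * (MvPolynomial.eval ![s, 1] p - MvPolynomial.eval ![s, 0] p) := by
  rw [MvPolynomial.eval_eq', MvPolynomial.eval_eq', MvPolynomial.eval_eq']
  rw [← Finset.sum_sub_distrib, Finset.mul_sum, ← Finset.sum_add_distrib]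
  apply Finset.sum_congr rfl
  intro d hd
  have hd1 : d 1 ≤ 1 := MvPolynomial.degreeOf_le_iff.mp hp d hd
  rw [Fin.prod_univ_two, Fin.prod_univ_two, Fin.prod_univ_two]
  simp only [Matrix.cons_val_zero, Matrix.cons_val_one, Matrix.head_cons]
  interval_cases h : d 1
  · simp only [pow_zero]; ring
  · simp only [pow_one, one_pow]; ring

lemma cell_affine {T : TMesh} {g : ℝ × ℝ → ℝ} (hg : PiecewisePoly 1 1 T g) {c : Rect}
    (hc : c ∈ T.cells) {s : ℝ} (hs1 : c.xmin ≤ s) (hs2 : s ≤ c.xmax) :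
    ∃ A B : ℝ, ∀ y, c.ymin ≤ y → y ≤ c.ymax → g (s, y) = A + B * y := by
  obtain ⟨p, _, h1, heval⟩ := hg c hc
  refine ⟨MvPolynomial.eval ![s, 0] p,
    MvPolynomial.eval ![s, 1] p - MvPolynomial.eval ![s, 0] p, fun y hy1 hy2 => ?_⟩
  have hm : ((s : ℝ), y) ∈ c.toSet := mem_rect.mpr ⟨⟨hs1, hs2⟩, ⟨hy1, hy2⟩⟩
  rw [heval (s, y) hm]
  have := affine_of_degreeOf_le p h1 s y
  simpa [mul_comm] using this

lemma g_continuous {T : TMesh} {g : ℝ × ℝ → ℝ} (hg : g ∈ SBar 1 1 0 0 T) : Continuous g := by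
  have h := hg.2.2.1 0 0 (by norm_num) (by norm_num)
  have hm : mpW Set.univ 0 0 g = g := rfl
  rw [hm] at h
  rw [← continuousOn_univ]
  exact h

def Fint (g : ℝ × ℝ → ℝ) (a b y : ℝ) : ℝ := ∫ s in a..b, g (s, y)

def Jfun (g : ℝ × ℝ → ℝ) (y1 y2 y3 : ℝ) (s : ℝ) : ℝ :=
  (g (s, y3) - g (s, y2)) / (y3 - y2) - (g (s, y2) - g (s, y1)) / (y2 - y1)

def kap (g : ℝ × ℝ → ℝ) (a b y1 y2 y3 : ℝ) : ℝ :=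
  (Fint g a b y3 - Fint g a b y2) / (y3 - y2) - (Fint g a b y2 - Fint g a b y1) / (y2 - y1)

lemma g_slice_continuous {g : ℝ × ℝ → ℝ} (hg : Continuous g) (y : ℝ) :
    Continuous (fun s => g (s, y)) := by fun_prop

lemma g_slice_integrable {g : ℝ × ℝ → ℝ} (hg : Continuous g) (y a b : ℝ) :
    IntervalIntegrable (fun s => g (s, y)) MeasureTheory.volume a b :=
  (g_slice_continuous hg y).intervalIntegrable a b

lemma Jfun_continuous {g : ℝ × ℝ → ℝ} (hg : Continuous g) (y1 y2 y3 : ℝ) :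
    Continuous (Jfun g y1 y2 y3) := by
  unfold Jfun
  fun_prop

lemma kap_eq_integral {g : ℝ × ℝ → ℝ} (hg : Continuous g) (a b y1 y2 y3 : ℝ) :
    kap g a b y1 y2 y3 = ∫ s in a..b, Jfun g y1 y2 y3 s := by
  unfold kap Fint Jfun
  have i1 := g_slice_integrable hg y1 a b
  have i2 := g_slice_integrable hg y2 a b
  have i3 := g_slice_integrable hg y3 a b
  rw [← intervalIntegral.integral_sub i3 i2, ← intervalIntegral.integral_sub i2 i1,
    ← intervalIntegral.integral_div, ← intervalIntegral.integral_div,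
    ← intervalIntegral.integral_sub ((i3.sub i2).div_const _) ((i2.sub i1).div_const _)]

lemma phi_kappa {F1 F2 F3 y1 y2 y3 : ℝ} (h12 : y1 < y2) (h23 : y2 < y3) :
    ((y3 - y1) * F2 = (y3 - y2) * F1 + (y2 - y1) * F3) ↔
      ((F3 - F2) / (y3 - y2) - (F2 - F1) / (y2 - y1) = 0) := by
  have h1 : y3 - y2 ≠ 0 := ne_of_gt (sub_pos.mpr h23)
  have h2 : y2 - y1 ≠ 0 := ne_of_gt (sub_pos.mpr h12)
  rw [sub_eq_zero, div_eq_div_iff h1 h2]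
  constructor <;> intro h <;> linear_combination -h

lemma slope_const (Y F : ℕ → ℝ) (p r : ℕ)
    (hk : ∀ j, p < j → j < r →
      (F (j+1) - F j) / (Y (j+1) - Y j) = (F j - F (j-1)) / (Y j - Y (j-1))) :
    ∀ j, p ≤ j → j < r → (F (j+1) - F j) / (Y (j+1) - Y j) = (F (p+1) - F p) / (Y (p+1) - Y p) := by
  intro j
  induction j with
  | zero =>
      intro h1 _
      have : p = 0 := by omega
      subst this; rfl
  | succ n ih =>
      intro h1 h2
      rcases eq_or_lt_of_le h1 with h | h
      · rw [← h]
      · have hn : p ≤ n := by omega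
        have := hk (n+1) (by omega) h2
        rw [this]
        simpa using ih hn (by omega)

lemma tele (Y F : ℕ → ℝ) (p : ℕ) :
    ∀ r, (∀ j, p < j → j < r →
      (F (j+1) - F j) / (Y (j+1) - Y j) = (F j - F (j-1)) / (Y j - Y (j-1))) →
    (∀ j, p ≤ j → j < r → Y j < Y (j+1)) → p ≤ r →
    F r - F p = ((F (p+1) - F p) / (Y (p+1) - Y p)) * (Y r - Y p) := by
  intro r
  induction r with
  | zero =>
      intro _ _ h1
      have : p = 0 := by omega
      subst this; ring
  | succ n ih =>
      intro hk hne h1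
      rcases eq_or_lt_of_le h1 with h | h
      · rw [← h]; ring
      · have hn : p ≤ n := by omega
        have hchord := ih (fun j hj1 hj2 => hk j hj1 (by omega))
          (fun j hj1 hj2 => hne j hj1 (by omega)) hn
        have hσ : (F (n+1) - F n) / (Y (n+1) - Y n) = (F (p+1) - F p) / (Y (p+1) - Y p) := by
          apply slope_const Y F p (n+1) (fun j hj1 hj2 => hk j hj1 hj2) n hn (by omega)
        have hden : Y (n+1) - Y n ≠ 0 := ne_of_gt (sub_pos.mpr (hne n hn (by omega)))
        have h2 : F (n+1) - F n = ((F (p+1) - F p) / (Y (p+1) - Y p)) * (Y (n+1) - Y n) := by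
          rw [← hσ, div_mul_cancel₀ _ hden]
        calc F (n+1) - F p = (F (n+1) - F n) + (F n - F p) := by ring
          _ = ((F (p+1) - F p) / (Y (p+1) - Y p)) * (Y (n+1) - Y n)
              + ((F (p+1) - F p) / (Y (p+1) - Y p)) * (Y n - Y p) := by rw [h2, hchord]
          _ = ((F (p+1) - F p) / (Y (p+1) - Y p)) * (Y (n+1) - Y p) := by ring

lemma Jfun_vanish_of_cell {T : TMesh} {g : ℝ × ℝ → ℝ} (hgp : PiecewisePoly 1 1 T g)
    {y1 y2 y3 : ℝ} (h12 : y1 < y2) (h23 : y2 < y3) {d : Rect} (hd : d ∈ T.cells)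
    {x : ℝ} (hx : d.xmin ≤ x ∧ x ≤ d.xmax) (hy1 : d.ymin ≤ y1) (hy3 : y3 ≤ d.ymax) :
    Jfun g y1 y2 y3 x = 0 := by
  obtain ⟨A, B, hAB⟩ := cell_affine hgp hd hx.1 hx.2
  unfold Jfun
  rw [hAB y1 hy1 (by linarith), hAB y2 (by linarith) (by linarith), hAB y3 (by linarith) hy3]
  have hne1 : y3 - y2 ≠ 0 := ne_of_gt (by linarith)
  have hne2 : y2 - y1 ≠ 0 := ne_of_gt (by linarith)
  field_simp
  ring

lemma kink_decomposition {T : TMesh} {g : ℝ × ℝ → ℝ} (hgc : Continuous g)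
    (hgp : PiecewisePoly 1 1 T g)
    {y1 y2 y3 : ℝ} (h12 : y1 < y2) (h23 : y2 < y3)
    (hy2lo : T.outer.ymin ≤ y2) (hy2hi : y2 ≤ T.outer.ymax)
    {a b : ℝ} (hab : a < b) (haΩ : T.outer.xmin ≤ a) (hbΩ : b ≤ T.outer.xmax)
    (hstrad : ∀ d ∈ T.cells, d.ymin < y2 → y2 < d.ymax → d.ymin ≤ y1 ∧ y3 ≤ d.ymax)
    (Hnest : ∀ α β, HorizLEdgeAt T α β y2 →
      (∃ x0, α ≤ x0 ∧ x0 ≤ β ∧ a < x0 ∧ x0 < b) → a ≤ α ∧ β ≤ b)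
    (Hedges : ∀ α β, HorizLEdgeAt T α β y2 → a ≤ α → β ≤ b →
      kap g α β y1 y2 y3 = 0) :
    kap g a b y1 y2 y3 = 0 := by
  classical
  set J : ℝ → ℝ := Jfun g y1 y2 y3 with hJ
  have hJc : Continuous J := Jfun_continuous hgc y1 y2 y3
  have Jzero : ∀ x, a < x → x < b →
      (∀ α β, HorizLEdgeAt T α β y2 → ¬(α ≤ x ∧ x ≤ β)) → J x = 0 := by
    intro x hx1 hx2 hnoedge
    have hPΩ : ((x : ℝ), y2) ∈ T.Omega :=
      mem_rect.mpr ⟨⟨haΩ.trans hx1.le, hx2.le.trans hbΩ⟩, ⟨hy2lo, hy2hi⟩⟩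
    obtain ⟨d, hd, hPd⟩ := mem_cell_of_mem_Omega T hPΩ
    have hmr := mem_rect.mp hPd
    rcases eq_or_lt_of_le hmr.2.1 with h | h
    · obtain ⟨α, β, hα, hβ, hedge⟩ := cell_edge_horiz T hd (Or.inl h.symm)
      exact absurd ⟨hα.trans hmr.1.1, hmr.1.2.trans hβ⟩ (hnoedge α β hedge)
    · rcases eq_or_lt_of_le hmr.2.2 with h' | h'
      · obtain ⟨α, β, hα, hβ, hedge⟩ := cell_edge_horiz T hd (Or.inr h')
        exact absurd ⟨hα.trans hmr.1.1, hmr.1.2.trans hβ⟩ (hnoedge α β hedge)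
      · obtain ⟨hs1, hs3⟩ := hstrad d hd h h'
        exact Jfun_vanish_of_cell hgp h12 h23 hd ⟨hmr.1.1, hmr.1.2⟩ hs1 hs3
  set ESet : Set (ℝ × ℝ) := {e : ℝ × ℝ | HorizLEdgeAt T e.1 e.2 y2 ∧ a ≤ e.1 ∧ e.2 ≤ b}
    with hESet
  have hmemE : ∀ e : ℝ × ℝ, e ∈ ESet ↔ HorizLEdgeAt T e.1 e.2 y2 ∧ a ≤ e.1 ∧ e.2 ≤ b := by
    intro e; rw [hESet]; exact Set.mem_setOf_eq ▸ Iff.rfl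
  have hcell : ∀ e : ℝ × ℝ, ∃ c : Rect, e ∈ ESet → c ∈ T.cells ∧
      (y2 = c.ymin ∨ y2 = c.ymax) ∧
      ∃ x0, (e.1 ≤ x0 ∧ x0 ≤ e.2) ∧ (c.xmin ≤ x0 ∧ x0 ≤ c.xmax) := by
    intro e
    by_cases he : e ∈ ESet
    · obtain ⟨c, hc, h1, h2⟩ := horiz_seg_cell T ((hmemE e).mp he).1.1 ((hmemE e).mp he).1.2.2.1
      exact ⟨c, fun _ => ⟨hc, h1, h2⟩⟩
    · exact ⟨T.outer, fun h => absurd h he⟩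
  choose ψ hψ using hcell
  have hinj : Set.InjOn ψ ESet := by
    intro e he e' he' heq
    obtain ⟨hc, hcy, x0, hx0e, hx0c⟩ := hψ e he
    obtain ⟨hc', hcy', x0', hx0e', hx0c'⟩ := hψ e' he'
    rw [← heq] at hx0c'
    obtain ⟨α0, β0, hα0, hβ0, hedge0⟩ := cell_edge_horiz T hc hcy
    have h1 := horiz_edges_eq_of_common T ((hmemE e).mp he).1 hedge0 hx0e
      ⟨hα0.trans hx0c.1, hx0c.2.trans hβ0⟩
    have h2 := horiz_edges_eq_of_common T ((hmemE e').mp he').1 hedge0 hx0e'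
      ⟨hα0.trans hx0c'.1, hx0c'.2.trans hβ0⟩
    exact Prod.ext (h1.1.trans h2.1.symm) (h1.2.trans h2.2.symm)
  have hfin : ESet.Finite := by
    apply Set.Finite.of_finite_image _ hinj
    apply Set.Finite.subset T.finite_cells
    rintro _ ⟨e, he, rfl⟩
    exact (hψ e he).1
  set EF := hfin.toFinset with hEF
  have hdisj : ∀ e ∈ EF, ∀ e' ∈ EF, e ≠ e' → ∀ x, x ∈ Set.Ioc e.1 e.2 →
      x ∉ Set.Ioc e'.1 e'.2 := by
    intro e he e' he' hne x hx hx'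
    rw [hEF, Set.Finite.mem_toFinset] at he he'
    have := horiz_edges_eq_of_common T ((hmemE e).mp he).1 ((hmemE e').mp he').1
      ⟨hx.1.le, hx.2⟩ ⟨hx'.1.le, hx'.2⟩
    exact hne (Prod.ext this.1 this.2)
  set Bad : Set ℝ := insert b (⋃ e ∈ EF, {e.1}) with hBad
  have hBadfin : Bad.Finite :=
    Set.Finite.insert b (Set.Finite.biUnion EF.finite_toSet fun _ _ => Set.finite_singleton _)
  have hBad0 : MeasureTheory.volume Bad = 0 := hBadfin.countable.measure_zero _
  have hae : J =ᵐ[MeasureTheory.volume.restrict (Set.Ioc a b)]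
      (fun x => ∑ e ∈ EF, (Set.Ioc e.1 e.2).indicator J x) := by
    have h1 : ∀ᵐ x ∂(MeasureTheory.volume.restrict (Set.Ioc a b)), x ∉ Bad :=
      MeasureTheory.ae_restrict_of_ae (by
        rw [MeasureTheory.ae_iff]
        simpa [not_not] using hBad0)
    have h2 : ∀ᵐ x ∂(MeasureTheory.volume.restrict (Set.Ioc a b)), x ∈ Set.Ioc a b :=
      MeasureTheory.ae_restrict_mem measurableSet_Ioc
    filter_upwards [h1, h2] with x hxB hxI
    have hxb : x ≠ b := fun h => hxB (h ▸ Set.mem_insert _ _)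
    have hxlt : x < b := lt_of_le_of_ne hxI.2 hxb
    by_cases hcase : ∃ e ∈ EF, e.1 ≤ x ∧ x ≤ e.2
    · obtain ⟨e, heF, hxe⟩ := hcase
      have hxne : x ≠ e.1 := fun h =>
        hxB (Set.mem_insert_iff.mpr (Or.inr (Set.mem_biUnion heF (h ▸ rfl))))
      have hxmem : x ∈ Set.Ioc e.1 e.2 := ⟨lt_of_le_of_ne hxe.1 (Ne.symm hxne), hxe.2⟩
      symm
      rw [Finset.sum_eq_single_of_mem e heF]
      · rw [Set.indicator_of_mem hxmem]
      · intro e' he' hne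
        exact Set.indicator_of_notMem (hdisj e heF e' he' (Ne.symm hne) x hxmem) _
    · rw [Jzero x hxI.1 hxlt ?_]
      · symm
        apply Finset.sum_eq_zero
        intro e heF
        apply Set.indicator_of_notMem
        intro hmem
        exact hcase ⟨e, heF, hmem.1.le, hmem.2⟩
      · rintro α β hedge ⟨hh1, hh2⟩
        have hmem : (α, β) ∈ ESet := (hmemE (α, β)).mpr
          ⟨hedge, Hnest α β hedge ⟨x, hh1, hh2, hxI.1, hxlt⟩⟩
        exact hcase ⟨(α, β), (hEF ▸ hfin.mem_toFinset.mpr hmem), hh1, hh2⟩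
  have hint : MeasureTheory.IntegrableOn J (Set.Ioc a b) := (hJc.intervalIntegrable a b).1
  calc kap g a b y1 y2 y3 = ∫ s in a..b, J s := by rw [hJ]; exact kap_eq_integral hgc a b y1 y2 y3
    _ = ∫ s in Set.Ioc a b, J s := intervalIntegral.integral_of_le hab.le
    _ = ∫ s in Set.Ioc a b, (∑ e ∈ EF, (Set.Ioc e.1 e.2).indicator J s) :=
        MeasureTheory.integral_congr_ae hae
    _ = ∑ e ∈ EF, ∫ s in Set.Ioc a b, (Set.Ioc e.1 e.2).indicator J s :=
        MeasureTheory.integral_finset_sum EF (fun e _ => hint.indicator measurableSet_Ioc)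
    _ = 0 := by
        apply Finset.sum_eq_zero
        intro e heF
        rw [MeasureTheory.setIntegral_indicator measurableSet_Ioc]
        have heE : e ∈ ESet := hfin.mem_toFinset.mp (hEF ▸ heF)
        have hsub : Set.Ioc e.1 e.2 ⊆ Set.Ioc a b :=
          Set.Ioc_subset_Ioc ((hmemE e).mp heE).2.1 ((hmemE e).mp heE).2.2
        rw [Set.inter_eq_self_of_subset_right hsub,
          ← intervalIntegral.integral_of_le ((hmemE e).mp heE).1.1.le, hJ,
          ← kap_eq_integral hgc,
          Hedges e.1 e.2 ((hmemE e).mp heE).1 ((hmemE e).mp heE).2.1 ((hmemE e).mp heE).2.2]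

section Nest

variable (H : HierMesh) {p0 q0 : ℕ} {gx gy : ℕ → ℝ}
  (hp0 : 0 < p0) (hq0 : 0 < q0)
  (hgx : ∀ i < p0, gx i < gx (i+1)) (hgy : ∀ j < q0, gy j < gy (j+1))
  (hcells : (H.level 0).cells = {c : Rect | ∃ i < p0, ∃ j < q0,
      c.xmin = gx i ∧ c.xmax = gx (i+1) ∧ c.ymin = gy j ∧ c.ymax = gy (j+1)})

include hq0 hgy hcells in
lemma cell_row {k : ℕ} (hk : k ≤ H.M) {c : Rect} (hc : c ∈ (H.level k).cells) {y : ℝ}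
    (h1 : c.ymin < y) (h2 : y < c.ymax) :
    ∃ r < q0, DyIn c.ymin c.ymax (gy r) (gy (r+1)) ∧ gy r < y ∧ y < gy (r+1) := by
  obtain ⟨r, hr, hdy⟩ := cells_dyadic H hcells k hk c hc
  have hRlt : gy r < gy (r+1) := hgy r hr
  obtain ⟨hb1, hb2⟩ := hdy.bounds hRlt
  exact ⟨r, hr, hdy, lt_of_le_of_lt hb1 h1, lt_of_lt_of_le h2 hb2⟩

include hq0 hgy hcells in
lemma cell_inv {k : ℕ} (hk : k < H.M) {c : Rect} (hcS : c ∈ H.subdivided k)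
    {d : Rect} (hd : d ∈ H.final.cells) {yi : ℝ} (hmid : (c.ymin + c.ymax) / 2 = yi)
    (hd1 : d.ymin < yi) (hd2 : yi < d.ymax) :
    d.ymin ≤ c.ymin ∧ c.ymax ≤ d.ymax := by
  have hc1 : c.ymin < yi := by rw [← hmid]; linarith [c.hy]
  have hc2 : yi < c.ymax := by rw [← hmid]; linarith [c.hy]
  obtain ⟨rc, hrc, hcdy, hcy1, hcy2⟩ :=
    cell_row H hq0 hgy hcells hk.le (subdivided_subset H hk hcS) hc1 hc2
  obtain ⟨rd, hrd, hddy, hdy1, hdy2⟩ :=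
    cell_row H hq0 hgy hcells (le_refl H.M) hd hd1 hd2
  have hreq : rc = rd := by
    by_contra hne
    rcases Nat.lt_or_ge rc rd with h | h
    · have := grid_le hgy (show rc + 1 ≤ rd by omega) hrd.le
      linarith
    · have hlt : rd < rc := by omega
      have := grid_le hgy (show rd + 1 ≤ rc by omega) hrc.le
      linarith
  subst hreq
  have hRlt : gy rc < gy (rc+1) := hgy rc hrc
  rcases DyIn_nested hRlt hddy hcdy hd1 hd2 hc1 hc2 with ⟨h1, h2⟩ | ⟨h1, h2⟩
  · -- c-range inside d-range
    exact ⟨h1, h2⟩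
  · -- d-range inside c-range: equal or half
    by_cases heq : c.ymin = d.ymin ∧ c.ymax = d.ymax
    · exact ⟨heq.1.ge, heq.2.le⟩
    · rcases DyIn_half hRlt hcdy hddy h1 h2 heq with h | h
      · rw [hmid] at h; linarith
      · rw [hmid] at h; linarith

include hp0 hq0 hgx hgy hcells in
lemma support_nest {a b yi yb yt : ℝ}
    (hedge : HorizLEdgeAt H.final a b yi)
    (hsh : SupportHeights H a b yi yb yt)
    {y' : ℝ} (hy'1 : yb < y') (hy'2 : y' < yt) :
    ∀ α β, HorizLEdgeAt H.final α β y' →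
      (∃ x0, α ≤ x0 ∧ x0 ≤ β ∧ a < x0 ∧ x0 < b) → a ≤ α ∧ β ≤ b := by
  intro α β he ⟨x0, hx0α, hx0β, hx0a, hx0b⟩
  have hOuter0 : (H.level 0).outer = H.final.outer :=
    (level_outer_eq H H.M (le_refl _)).symm ▸ level_outer_eq H 0 (Nat.zero_le _) ▸ rfl
  have hebounds1 := skeleton_x_bounds H.final
    (he.2.2.1 (mem_horiz_seg.mpr ⟨⟨le_refl _, he.1.le⟩, rfl⟩))
  have hebounds2 := skeleton_x_bounds H.final
    (he.2.2.1 (mem_horiz_seg.mpr ⟨⟨he.1.le, le_refl _⟩, rfl⟩))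
  obtain ⟨hbyi, hyit, hcase⟩ := hsh
  rcases hcase with ⟨hL0, _, _, _⟩ | ⟨k, hlev, c, hcS, hymin, hymax, hmid, hax, hxb⟩
  · -- level-0 branch: the edge is full-width
    obtain ⟨cc, hcc, hccy, _⟩ := horiz_seg_cell (H.level 0) hedge.1 hL0.1
    have hgrid : ∃ m ≤ q0, yi = gy m := by
      rw [hcells] at hcc
      obtain ⟨i, hi, j, hj, _, _, h5, h6⟩ := hcc
      rcases hccy with h | h
      · exact ⟨j, hj.le, h.trans h5⟩
      · exact ⟨j + 1, hj, h.trans h6⟩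
    obtain ⟨m, hm, rfl⟩ := hgrid
    have hline := tensor_line_subset (H.level 0) hp0 hq0 hgx hgy hcells hm
    have hlineF : Set.Icc H.final.outer.xmin H.final.outer.xmax ×ˢ ({gy m} : Set ℝ)
        ⊆ H.final.skeleton := by
      rw [← hOuter0]
      exact hline.trans (skeleton_le_final H (Nat.zero_le _))
    have hbounds1 := skeleton_x_bounds H.final
      (hedge.2.2.1 (mem_horiz_seg.mpr ⟨⟨le_refl _, hedge.1.le⟩, rfl⟩))
    have hbounds2 := skeleton_x_bounds H.final
      (hedge.2.2.1 (mem_horiz_seg.mpr ⟨⟨hedge.1.le, le_refl _⟩, rfl⟩))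
    have hmax := hedge.2.2.2 _ (Or.inl ⟨H.final.outer.xmin, H.final.outer.xmax, gy m,
      H.final.outer.hx, rfl⟩) hlineF
      (Set.prod_mono (Set.Icc_subset_Icc hbounds1.1 hbounds2.2.1) (le_refl _))
    obtain ⟨hA, hB⟩ := Icc_prod_singleton_inj H.final.outer.hx.le hedge.1.le hmax
    constructor
    · rw [← hA]; exact hebounds1.1
    · rw [← hB]; exact hebounds2.2.1
  · -- level-(k+1) branch
    have hkM : k < H.M := by
      by_contra hcon
      push_neg at hcon
      exact (hlev.2 H.M (by omega)) hedge.2.2.1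
    have hinv : ∀ d ∈ H.final.cells, d.ymin < yi → yi < d.ymax →
        d.ymin ≤ yb ∧ yt ≤ d.ymax := by
      intro d hd h1 h2
      have := cell_inv H hq0 hgy hcells hkM hcS hd hmid h1 h2
      rw [← hymin, ← hymax]
      exact this
    have hbound_yi := skeleton_x_bounds H.final
      (hedge.2.2.1 (mem_horiz_seg.mpr ⟨⟨le_refl _, hedge.1.le⟩, rfl⟩))
    have hright : β ≤ b := by
      by_contra hβ
      push_neg at hβ
      have hstar : ∃ x', b < x' ∧ x' < β ∧ ((x', yi) : ℝ × ℝ) ∉ H.final.skeleton := by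
        by_contra hcon
        push_neg at hcon
        set m := (b + β) / 2 with hm
        have hs' : Set.Icc a m ×ˢ ({yi} : Set ℝ) ⊆ H.final.skeleton := by
          rintro ⟨u, v⟩ hu
          obtain ⟨⟨h1, h2⟩, rfl⟩ := mem_horiz_seg.mp hu
          rcases le_or_gt u b with h | h
          · exact hedge.2.2.1 (mem_horiz_seg.mpr ⟨⟨h1, h⟩, rfl⟩)
          · exact hcon u h (by rw [hm] at h2; linarith)
        have ham : a < m := by rw [hm]; linarith [hedge.1]
        have hmax := hedge.2.2.2 _ (Or.inl ⟨a, m, yi, ham, rfl⟩)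
          hs' (Set.prod_mono (Set.Icc_subset_Icc (le_refl _) (by rw [hm]; linarith)) (le_refl _))
        obtain ⟨_, hB⟩ := Icc_prod_singleton_inj ham.le hedge.1.le hmax
        rw [hm] at hB; linarith
      obtain ⟨x', hx'1, hx'2, hx'skel⟩ := hstar
      have hx'Ω : ((x' : ℝ), yi) ∈ H.final.Omega :=
        mem_rect.mpr ⟨⟨hbound_yi.1.trans (by linarith [hedge.1]),
          hx'2.le.trans hebounds2.2.1⟩, ⟨hbound_yi.2.2.1, hbound_yi.2.2.2⟩⟩
      obtain ⟨d, hd, hd1, hd2, hd3, hd4⟩ :=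
        mem_interior_cell_of_not_skeleton H.final hx'Ω hx'skel
      have hy'mem : ((x' : ℝ), y') ∈ H.final.skeleton :=
        he.2.2.1 (mem_horiz_seg.mpr ⟨⟨by linarith, hx'2.le⟩, rfl⟩)
      have hy'notin : ¬(d.ymin < y' ∧ y' < d.ymax) := by
        rintro ⟨hh1, hh2⟩
        exact interior_disjoint_skeleton H.final hd
          (show ((x' : ℝ), y') ∈ interior d.toSet from
            mem_interior_rect_iff.mpr ⟨⟨hd1, hd2⟩, ⟨hh1, hh2⟩⟩) hy'mem
      obtain ⟨hi1, hi2⟩ := hinv d hd hd3 hd4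
      exact hy'notin ⟨by linarith, by linarith⟩
    have hleft : a ≤ α := by
      by_contra hα
      push_neg at hα
      have hstar : ∃ x', α < x' ∧ x' < a ∧ ((x', yi) : ℝ × ℝ) ∉ H.final.skeleton := by
        by_contra hcon
        push_neg at hcon
        set m := (α + a) / 2 with hm
        have hs' : Set.Icc m b ×ˢ ({yi} : Set ℝ) ⊆ H.final.skeleton := by
          rintro ⟨u, v⟩ hu
          obtain ⟨⟨h1, h2⟩, rfl⟩ := mem_horiz_seg.mp hu
          rcases le_or_gt a u with h | h
          · exact hedge.2.2.1 (mem_horiz_seg.mpr ⟨⟨h, h2⟩, rfl⟩)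
          · exact hcon u (by rw [hm] at h1; linarith) h
        have hmb : m < b := by rw [hm]; linarith [hedge.1]
        have hmax := hedge.2.2.2 _ (Or.inl ⟨m, b, yi, hmb, rfl⟩)
          hs' (Set.prod_mono (Set.Icc_subset_Icc (by rw [hm]; linarith) (le_refl _)) (le_refl _))
        obtain ⟨hA, _⟩ := Icc_prod_singleton_inj hmb.le hedge.1.le hmax
        rw [hm] at hA; linarith
      obtain ⟨x', hx'1, hx'2, hx'skel⟩ := hstar
      have hx'Ω : ((x' : ℝ), yi) ∈ H.final.Omega :=
        mem_rect.mpr ⟨⟨hebounds1.1.trans hx'1.le,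
          hx'2.le.trans hbound_yi.2.1⟩, ⟨hbound_yi.2.2.1, hbound_yi.2.2.2⟩⟩
      obtain ⟨d, hd, hd1, hd2, hd3, hd4⟩ :=
        mem_interior_cell_of_not_skeleton H.final hx'Ω hx'skel
      have hy'mem : ((x' : ℝ), y') ∈ H.final.skeleton :=
        he.2.2.1 (mem_horiz_seg.mpr ⟨⟨hx'1.le, by linarith⟩, rfl⟩)
      have hy'notin : ¬(d.ymin < y' ∧ y' < d.ymax) := by
        rintro ⟨hh1, hh2⟩
        exact interior_disjoint_skeleton H.final hd
          (show ((x' : ℝ), y') ∈ interior d.toSet from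
            mem_interior_rect_iff.mpr ⟨⟨hd1, hd2⟩, ⟨hh1, hh2⟩⟩) hy'mem
      obtain ⟨hi1, hi2⟩ := hinv d hd hd3 hd4
      exact hy'notin ⟨by linarith, by linarith⟩
    exact ⟨hleft, hright⟩

end Nest

lemma quad_subset {c q : Rect} (hq : q ∈ c.quads) : q.toSet ⊆ c.toSet := by
  have hx := c.hx
  have hy := c.hy
  rcases Rect.quads_cases hq with rfl | rfl | rfl | rfl <;>
    · intro p hp
      rw [mem_rect] at hp ⊢
      simp only [Rect.qLL, Rect.qLR, Rect.qUL, Rect.qUR] at hp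
      obtain ⟨⟨h1, h2⟩, h3, h4⟩ := hp
      exact ⟨⟨by linarith, by linarith⟩, ⟨by linarith, by linarith⟩⟩

lemma interior_edge_height (T : TMesh) {a b y : ℝ} (h : HorizLEdgeAt T a b y)
    (hni : ¬ Set.Icc a b ×ˢ ({y} : Set ℝ) ⊆ frontier T.Omega) :
    T.outer.ymin < y ∧ y < T.outer.ymax := by
  have hb := skeleton_x_bounds T (h.2.2.1 (mem_horiz_seg.mpr ⟨⟨le_refl _, h.1.le⟩, rfl⟩))
  constructor
  · rcases eq_or_lt_of_le hb.2.2.1 with he | he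
    · exfalso
      apply hni
      intro p hp
      rw [frontier_Omega_iff]
      obtain ⟨⟨h1, h2⟩, h3⟩ := mem_horiz_seg.mp (show (p.1, p.2) ∈ _ from hp)
      refine ⟨skeleton_subset_Omega T (h.2.2.1 hp), Or.inr (Or.inr (Or.inl ?_))⟩
      rw [h3, ← he]
    · exact he
  · rcases eq_or_lt_of_le hb.2.2.2 with he | he
    · exfalso
      apply hni
      intro p hp
      rw [frontier_Omega_iff]
      obtain ⟨⟨h1, h2⟩, h3⟩ := mem_horiz_seg.mp (show (p.1, p.2) ∈ _ from hp)
      refine ⟨skeleton_subset_Omega T (h.2.2.1 hp), Or.inr (Or.inr (Or.inr ?_))⟩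
      rw [h3, he]
    · exact he

lemma new_point_cross (H : HierMesh) {k : ℕ} (hk : k < H.M) {p : ℝ × ℝ}
    (hp1 : p ∈ (H.level (k+1)).skeleton) (hp2 : p ∉ (H.level k).skeleton) :
    ∃ c ∈ H.subdivided k, c.xmin < p.1 ∧ p.1 < c.xmax ∧ c.ymin < p.2 ∧ p.2 < c.ymax ∧
      (p.1 = (c.xmin + c.xmax) / 2 ∨ p.2 = (c.ymin + c.ymax) / 2) := by
  rw [TMesh.skeleton, Set.mem_iUnion₂] at hp1
  obtain ⟨e, he, hpe⟩ := hp1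
  rw [cells_succ H hk] at he
  rcases he with ⟨hold, _⟩ | hnew
  · exact absurd (frontier_subset_skeleton _ hold hpe) hp2
  · rw [Set.mem_iUnion₂] at hnew
    obtain ⟨c, hcS, hq⟩ := hnew
    have hpc : p ∈ c.toSet := quad_subset hq ((rect_closed e).frontier_subset hpe)
    have hpnc : p ∉ frontier c.toSet := fun hcon =>
      hp2 (frontier_subset_skeleton _ (subdivided_subset H hk hcS) hcon)
    obtain ⟨h1, h2, h3, h4⟩ := mem_interior_rect hpc hpnc
    refine ⟨c, hcS, h1, h2, h3, h4, ?_⟩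
    obtain ⟨_, hcase⟩ := rect_frontier_iff.mp hpe
    rcases Rect.quads_cases hq with rfl | rfl | rfl | rfl <;>
      simp only [Rect.qLL, Rect.qLR, Rect.qUL, Rect.qUR] at hcase
    · rcases hcase with h | h | h | h
      · exact absurd h (by linarith)
      · exact Or.inl h
      · exact absurd h (by linarith)
      · exact Or.inr h
    · rcases hcase with h | h | h | h
      · exact Or.inl h
      · exact absurd h (by linarith)
      · exact absurd h (by linarith)
      · exact Or.inr h
    · rcases hcase with h | h | h | h
      · exact absurd h (by linarith)
      · exact Or.inl h
      · exact Or.inr h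
      · exact absurd h (by linarith)
    · rcases hcase with h | h | h | h
      · exact Or.inl h
      · exact absurd h (by linarith)
      · exact Or.inr h
      · exact absurd h (by linarith)

section ExistsSupport

variable (H : HierMesh) {p0 q0 : ℕ} {gx gy : ℕ → ℝ}
  (hp0 : 0 < p0) (hq0 : 0 < q0)
  (hgx : ∀ i < p0, gx i < gx (i+1)) (hgy : ∀ j < q0, gy j < gy (j+1))
  (hcells : (H.level 0).cells = {c : Rect | ∃ i < p0, ∃ j < q0,
      c.xmin = gx i ∧ c.xmax = gx (i+1) ∧ c.ymin = gy j ∧ c.ymax = gy (j+1)})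

include hp0 hq0 hgx hgy hcells in
lemma exists_support {a b yi : ℝ} (hedge : HorizLEdgeAt H.final a b yi)
    (hyi1 : H.final.outer.ymin < yi) (hyi2 : yi < H.final.outer.ymax) :
    ∃ yb yt, SupportHeights H a b yi yb yt := by
  classical
  have hOuter0 : (H.level 0).outer = H.final.outer := level_outer_eq H H.M (le_refl _) ▸ rfl
  obtain ⟨k0, hk0M, hlev⟩ := exists_ledge_level H hedge.2.2.1
  rcases Nat.eq_zero_or_eq_succ_pred k0 with hk00 | hk0s
  · -- level 0
    subst hk00
    obtain ⟨cc, hcc, hccy, _⟩ := horiz_seg_cell (H.level 0) hedge.1 hlev.1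
    have hgrid : ∃ m ≤ q0, yi = gy m := by
      rw [hcells] at hcc
      obtain ⟨i, hi, j, hj, _, _, h5, h6⟩ := hcc
      rcases hccy with h | h
      · exact ⟨j, hj.le, h.trans h5⟩
      · exact ⟨j + 1, hj, h.trans h6⟩
    obtain ⟨m, hm, hyim⟩ := hgrid
    obtain ⟨hgy0, hgyq⟩ := tensor_y_bounds (H.level 0) hp0 hq0 hgx hgy hcells
    have hm0 : 0 < m := by
      apply grid_index_lt hgy (Nat.zero_le q0) hm
      rw [hgy0, hOuter0, ← hyim]
      exact hyi1
    have hmq : m < q0 := by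
      apply grid_index_lt hgy hm (le_refl q0)
      rw [hgyq, hOuter0, ← hyim]
      exact hyi2
    refine ⟨gy (m - 1), gy (m + 1), ?_, ?_, Or.inl ⟨hlev, ?_, ?_, ?_⟩⟩
    · rw [hyim]; exact grid_lt hgy (by omega) hm
    · rw [hyim]; exact grid_lt hgy (by omega) hmq
    · exact ⟨_, _, tensor_edge (H.level 0) hp0 hq0 hgx hgy hcells (by omega)⟩
    · exact ⟨_, _, tensor_edge (H.level 0) hp0 hq0 hgx hgy hcells (by omega)⟩
    · rintro y a' b' hedge' ⟨hy1, hy2, hyne⟩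
      obtain ⟨m', hm', rfl⟩ := tensor_edge_height (H.level 0) hp0 hq0 hgx hgy hcells hedge'
      have hi1 : m - 1 < m' := grid_index_lt hgy (by omega) hm' hy1
      have hi2 : m' < m + 1 := grid_index_lt hgy hm' (by omega) hy2
      have : m' = m := by omega
      subst this
      exact hyne hyim.symm
  · -- level k+1
    obtain ⟨k, hk0s⟩ : ∃ k, k0 = k + 1 := by
      rcases k0 with _ | k
      · exact absurd hk0s (by simp)
      · exact ⟨k, rfl⟩
    subst hk0s
    have hkM : k < H.M := by omega
    have hnotk : ¬ Set.Icc a b ×ˢ ({yi} : Set ℝ) ⊆ (H.level k).skeleton :=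
      hlev.2 k (by omega)
    rw [Set.not_subset] at hnotk
    obtain ⟨pp, hpp1, hpp2⟩ := hnotk
    obtain ⟨⟨hpa, hpb⟩, hpyi⟩ := mem_horiz_seg.mp (show (pp.1, pp.2) ∈ _ from hpp1)
    have hopen : IsOpen ((H.level k).skeleton)ᶜ := (skeleton_closed _).isOpen_compl
    obtain ⟨ε, hε, hball⟩ := Metric.isOpen_iff.mp hopen pp hpp2
    set x1 : ℝ := max a (pp.1 - ε / 2) with hx1
    set x2 : ℝ := min b (pp.1 + ε / 2) with hx2
    have hx12 : x1 < x2 := by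
      rw [hx1, hx2]
      apply max_lt <;> apply lt_min
      · exact hedge.1
      · linarith
      · linarith
      · linarith
    have hIprop : ∀ x, x1 < x → x < x2 →
        ((x, yi) : ℝ × ℝ) ∈ (H.level (k+1)).skeleton ∧
        ((x, yi) : ℝ × ℝ) ∉ (H.level k).skeleton := by
      intro x hxa hxb
      have hxab : a ≤ x ∧ x ≤ b := by
        constructor
        · exact le_of_lt (lt_of_le_of_lt (le_max_left _ _) hxa)
        · exact le_of_lt (lt_of_lt_of_le hxb (min_le_left _ _))
      constructor
      · exact hlev.1 (mem_horiz_seg.mpr ⟨hxab, rfl⟩)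
      · intro hcon
        have hdist : dist ((x, yi) : ℝ × ℝ) pp < ε := by
          rw [Prod.dist_eq]
          apply max_lt
          · rw [Real.dist_eq]
            have h1 : pp.1 - ε/2 ≤ x1 := le_max_right _ _
            have h2 : x2 ≤ pp.1 + ε/2 := min_le_right _ _
            rw [abs_lt]
            constructor <;> [linarith; linarith]
          · show dist yi pp.2 < ε
            rw [hpyi]
            simpa using hε
        exact hball (Metric.mem_ball.mpr hdist) hcon
    set MidX : Set ℝ := (fun c : Rect => (c.xmin + c.xmax) / 2) '' (H.subdivided k) with hMidX
    have hMidXfin : MidX.Finite :=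
      (Set.Finite.subset (H.level k).finite_cells (subdivided_subset H hkM)).image _
    have hinf : (Set.Ioo x1 x2).Infinite := Set.Ioo_infinite hx12
    obtain ⟨x, hxI, hxM⟩ := (hinf.diff hMidXfin).nonempty
    obtain ⟨hxs1, hxs2⟩ := hIprop x hxI.1 hxI.2
    obtain ⟨c, hcS, hc1, hc2, hc3, hc4, hcase⟩ := new_point_cross H hkM hxs1 hxs2
    dsimp only at hc1 hc2 hc3 hc4 hcase
    have hmid : (c.ymin + c.ymax) / 2 = yi := by
      rcases hcase with h | h
      · exact absurd ⟨c, hcS, h.symm⟩ hxM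
      · exact h.symm
    have hmidline : Set.Icc c.xmin c.xmax ×ˢ ({yi} : Set ℝ) ⊆ H.final.skeleton := by
      rw [← hmid]
      exact (midline_subset_skeleton H hkM hcS).trans (skeleton_le_final H (by omega))
    have hxab : a ≤ x ∧ x ≤ b := ⟨le_of_lt (lt_of_le_of_lt (le_max_left _ _) hxI.1),
      le_of_lt (lt_of_lt_of_le hxI.2 (min_le_left _ _))⟩
    set u1 : ℝ := min a c.xmin with hu1
    set u2 : ℝ := max b c.xmax with hu2
    have hUsub : Set.Icc u1 u2 ×ˢ ({yi} : Set ℝ) ⊆ H.final.skeleton := by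
      rintro ⟨u, v⟩ hu
      obtain ⟨⟨hua, hub⟩, rfl⟩ := mem_horiz_seg.mp hu
      rcases lt_or_ge u a with h | h
      · have hua' : min a c.xmin ≤ u := hua
        rcases min_cases a c.xmin with ⟨he, _⟩ | ⟨he, _⟩
        · rw [he] at hua'; linarith
        · rw [he] at hua'
          exact hmidline (mem_horiz_seg.mpr ⟨⟨hua', by linarith⟩, rfl⟩)
      · rcases le_or_gt u b with h' | h'
        · exact hedge.2.2.1 (mem_horiz_seg.mpr ⟨⟨h, h'⟩, rfl⟩)
        · have hub' : u ≤ max b c.xmax := hub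
          rcases max_cases b c.xmax with ⟨he, _⟩ | ⟨he, _⟩
          · rw [he] at hub'; linarith
          · rw [he] at hub'
            exact hmidline (mem_horiz_seg.mpr ⟨⟨by linarith, hub'⟩, rfl⟩)
    have hu12 : u1 < u2 :=
      lt_of_le_of_lt (min_le_left _ _) (lt_of_lt_of_le hedge.1 (le_max_left _ _))
    have hmax := hedge.2.2.2 _ (Or.inl ⟨u1, u2, yi, hu12, rfl⟩) hUsub
      (Set.prod_mono (Set.Icc_subset_Icc (min_le_left _ _) (le_max_left _ _)) (le_refl _))
    obtain ⟨hA, hB⟩ := Icc_prod_singleton_inj hu12.le hedge.1.le hmax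
    have hax : a ≤ c.xmin := min_eq_left_iff.mp (hu1 ▸ hA)
    have hxb : c.xmax ≤ b := max_eq_left_iff.mp (hu2 ▸ hB)
    refine ⟨c.ymin, c.ymax, ?_, ?_, Or.inr ⟨k, hlev, c, hcS, rfl, rfl, hmid, hax, hxb⟩⟩
    · have := c.hy; linarith
    · have := c.hy; linarith

end ExistsSupport

section Span

variable (H : HierMesh) {p0 q0 : ℕ} {gx gy : ℕ → ℝ}
  (hp0 : 0 < p0) (hq0 : 0 < q0)
  (hgx : ∀ i < p0, gx i < gx (i+1)) (hgy : ∀ j < q0, gy j < gy (j+1))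
  (hcells : (H.level 0).cells = {c : Rect | ∃ i < p0, ∃ j < q0,
      c.xmin = gx i ∧ c.xmax = gx (i+1) ∧ c.ymin = gy j ∧ c.ymax = gy (j+1)})

include hgy in
lemma row_unique {r r' : ℕ} (hr : r < q0) (hr' : r' < q0) {y : ℝ}
    (h1 : gy r < y) (h2 : y < gy (r+1)) (h1' : gy r' < y) (h2' : y < gy (r'+1)) : r = r' := by
  by_contra hne
  rcases Nat.lt_or_ge r r' with h | h
  · have := grid_le hgy (show r + 1 ≤ r' by omega) hr'.le
    linarith
  · have hlt : r' < r := by omega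
    have := grid_le hgy (show r' + 1 ≤ r by omega) hr.le
    linarith

include hp0 hq0 hgx hgy hcells in
lemma grid_injective {u v : ℕ} (hu : u ≤ q0) (hv : v ≤ q0) (h : gy u = gy v) : u = v := by
  by_contra hne
  rcases Nat.lt_or_ge u v with h' | h'
  · exact absurd h (ne_of_lt (grid_lt hgy h' hv))
  · exact absurd h (ne_of_gt (grid_lt hgy (by omega) hu))

include hp0 hq0 hgx hgy hcells in
lemma support_level0_struct {a b yi yb yt : ℝ}
    (hedge : HorizLEdgeAt H.final a b yi)
    (hbyi : yb < yi) (hyit : yi < yt)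
    (hL0 : LEdgeLevel H (Set.Icc a b ×ˢ ({yi} : Set ℝ)) 0)
    (hb' : ∃ a' b', HorizLEdgeAt (H.level 0) a' b' yb)
    (ht' : ∃ a' b', HorizLEdgeAt (H.level 0) a' b' yt)
    (hno : ∀ y a' b', HorizLEdgeAt (H.level 0) a' b' y → ¬(yb < y ∧ y < yt ∧ y ≠ yi)) :
    ∃ v, 0 < v ∧ v < q0 ∧ yi = gy v ∧ yb = gy (v-1) ∧ yt = gy (v+1) := by
  obtain ⟨cc, hcc, hccy, _⟩ := horiz_seg_cell (H.level 0) hedge.1 hL0.1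
  have hgrid : ∃ v ≤ q0, yi = gy v := by
    rw [hcells] at hcc
    obtain ⟨i, hi, j, hj, _, _, h5, h6⟩ := hcc
    rcases hccy with h | h
    · exact ⟨j, hj.le, h.trans h5⟩
    · exact ⟨j + 1, hj, h.trans h6⟩
  obtain ⟨v, hv, hyiv⟩ := hgrid
  obtain ⟨ab, bb, heb⟩ := hb'
  obtain ⟨at', bt, het⟩ := ht'
  obtain ⟨u, hu, hybu⟩ := tensor_edge_height (H.level 0) hp0 hq0 hgx hgy hcells heb
  obtain ⟨w, hw, hytw⟩ := tensor_edge_height (H.level 0) hp0 hq0 hgx hgy hcells het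
  have huv : u < v := grid_index_lt hgy hu hv (by rw [← hybu, ← hyiv]; exact hbyi)
  have hvw : v < w := grid_index_lt hgy hv hw (by rw [← hyiv, ← hytw]; exact hyit)
  have hu1 : u + 1 = v := by
    have hne := hno (gy (u+1)) _ _ (tensor_edge (H.level 0) hp0 hq0 hgx hgy hcells (by omega))
    push_neg at hne
    have hlt1 : yb < gy (u+1) := by rw [hybu]; exact hgy u (by omega)
    have hlt2 : gy (u+1) < yt := by rw [hytw]; exact grid_lt hgy (by omega) hw
    have heq : gy (u+1) = yi := hne hlt1 hlt2
    rw [hyiv] at heq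
    exact grid_injective H hp0 hq0 hgx hgy hcells (by omega) hv heq
  have hw1 : w = v + 1 := by
    by_contra hcon
    have hvw1 : v + 1 < w := by omega
    have hne := hno (gy (v+1)) _ _ (tensor_edge (H.level 0) hp0 hq0 hgx hgy hcells (by omega))
    push_neg at hne
    have hlt1 : yb < gy (v+1) := by
      rw [hybu]
      exact grid_lt hgy (by omega) (by omega)
    have hlt2 : gy (v+1) < yt := by rw [hytw]; exact grid_lt hgy (by omega) hw
    have heq : gy (v+1) = yi := hne hlt1 hlt2
    rw [hyiv] at heq
    have := grid_injective H hp0 hq0 hgx hgy hcells (by omega) hv heq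
    omega
  refine ⟨v, by omega, by omega, hyiv, ?_, ?_⟩
  · have huveq : u = v - 1 := by omega
    rw [hybu, huveq]
  · rw [hytw, hw1]

include hq0 hgy hcells in
lemma support_dyadic_struct {a b yi yb yt : ℝ}
    (hedge : HorizLEdgeAt H.final a b yi)
    {k : ℕ} (hlev : LEdgeLevel H (Set.Icc a b ×ˢ ({yi} : Set ℝ)) (k + 1))
    {c : Rect} (hcS : c ∈ H.subdivided k) (hymin : c.ymin = yb) (hymax : c.ymax = yt) :
    ∃ r < q0, DyIn yb yt (gy r) (gy (r+1)) := by
  have hkM : k < H.M := by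
    by_contra hcon
    push_neg at hcon
    exact (hlev.2 H.M (by omega)) hedge.2.2.1
  obtain ⟨r, hr, hdy⟩ := cells_dyadic H hcells k hkM.le c (subdivided_subset H hkM hcS)
  rw [hymin, hymax] at hdy
  exact ⟨r, hr, hdy⟩

include hp0 hq0 hgx hgy hcells in
lemma support_span {a b yi yb yt : ℝ}
    (hedge : HorizLEdgeAt H.final a b yi) (hsh : SupportHeights H a b yi yb yt)
    {α β yj yb' yt' : ℝ}
    (hedge' : HorizLEdgeAt H.final α β yj) (hsh' : SupportHeights H α β yj yb' yt')
    (hj1 : yb < yj) (hj2 : yj < yt) (hjne : yj ≠ yi) :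
    (yb ≤ yb' ∧ yt' ≤ yi) ∨ (yi ≤ yb' ∧ yt' ≤ yt) := by
  obtain ⟨hbyi, hyit, hcase⟩ := hsh
  obtain ⟨hbyi', hyit', hcase'⟩ := hsh'
  rcases hcase with ⟨hL0, hb', ht', hno⟩ | ⟨k, hlev, c, hcS, hymin, hymax, hmid, _, _⟩
  · -- ℓ level 0 : yb,yi,yt consecutive grid values around v
    obtain ⟨v, hv0, hvq, hyiv, hybv, hytv⟩ :=
      support_level0_struct H hp0 hq0 hgx hgy hcells hedge hbyi hyit hL0 hb' ht' hno
    rcases hcase' with ⟨hL0', hb'', ht'', hno'⟩ | ⟨k', hlev', c', hcS', hymin', hymax', hmid', _, _⟩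
    · -- both level 0: contradiction
      obtain ⟨v', hv0', hvq', hyjv, _, _⟩ :=
        support_level0_struct H hp0 hq0 hgx hgy hcells hedge' hbyi' hyit' hL0' hb'' ht'' hno'
      exfalso
      have h1 : v - 1 < v' := grid_index_lt hgy (by omega) (by omega)
        (by rw [← hybv, ← hyjv]; exact hj1)
      have h2 : v' < v + 1 := grid_index_lt hgy (by omega) (by omega)
        (by rw [← hyjv, ← hytv]; exact hj2)
      have : v' = v := by omega
      exact hjne (by rw [hyjv, this, ← hyiv])
    · -- e dyadic in a row, ℓ level 0
      obtain ⟨r', hr', hdy'⟩ :=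
        support_dyadic_struct H hq0 hgy hcells hedge' hlev' hcS' hymin' hymax'
      have hRlt : gy r' < gy (r'+1) := hgy r' hr'
      obtain ⟨hbd1, hbd2⟩ := hdy'.bounds hRlt
      have hjrow1 : gy r' < yj := lt_of_le_of_lt hbd1 hbyi'
      have hjrow2 : yj < gy (r'+1) := lt_of_lt_of_le hyit' hbd2
      rcases lt_or_gt_of_ne (show yj ≠ gy v from hyiv ▸ hjne) with h | h
      · -- yj in row v-1
        have hrow : r' = v - 1 := by
          apply row_unique hgy hr' (by omega) hjrow1 hjrow2
          · rw [← hybv]; exact hj1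
          · show yj < gy (v - 1 + 1)
            have : v - 1 + 1 = v := by omega
            rw [this]; exact h
        subst hrow
        left
        constructor
        · rw [hybv]; exact hbd1
        · have : v - 1 + 1 = v := by omega
          rw [hyiv, ← this]; exact hbd2
      · -- yj in row v
        have hrow : r' = v := by
          apply row_unique hgy hr' (by omega) hjrow1 hjrow2
          · exact h
          · rw [← hytv]; exact hj2
        subst hrow
        right
        constructor
        · rw [hyiv]; exact hbd1
        · rw [hytv]; exact hbd2
  · -- ℓ dyadic in a row
    obtain ⟨r, hr, hdy⟩ := support_dyadic_struct H hq0 hgy hcells hedge hlev hcS hymin hymax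
    have hRlt : gy r < gy (r+1) := hgy r hr
    obtain ⟨hbd1, hbd2⟩ := hdy.bounds hRlt
    have hjrow1 : gy r < yj := lt_of_le_of_lt hbd1 hj1
    have hjrow2 : yj < gy (r+1) := lt_of_lt_of_le hj2 hbd2
    rcases hcase' with ⟨hL0', hb'', ht'', hno'⟩ | ⟨k', hlev', c', hcS', hymin', hymax', hmid', _, _⟩
    · -- e level 0: yj is a grid value strictly inside a row: contradiction
      exfalso
      obtain ⟨v', hv0', hvq', hyjv, _, _⟩ :=
        support_level0_struct H hp0 hq0 hgx hgy hcells hedge' hbyi' hyit' hL0' hb'' ht'' hno'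
      rw [hyjv] at hjrow1 hjrow2
      have h1 : r < v' := grid_index_lt hgy hr.le (by omega) hjrow1
      have h2 : v' < r + 1 := grid_index_lt hgy (by omega) hr hjrow2
      omega
    · -- both dyadic
      obtain ⟨r', hr', hdy'⟩ :=
        support_dyadic_struct H hq0 hgy hcells hedge' hlev' hcS' hymin' hymax'
      have hRlt' : gy r' < gy (r'+1) := hgy r' hr'
      obtain ⟨hbd1', hbd2'⟩ := hdy'.bounds hRlt'
      have hjrow1' : gy r' < yj := lt_of_le_of_lt hbd1' hbyi'
      have hjrow2' : yj < gy (r'+1) := lt_of_lt_of_le hyit' hbd2'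
      have hrow : r' = r := row_unique hgy hr' hr hjrow1' hjrow2' hjrow1 hjrow2
      subst hrow
      have hmids : (yb + yt) / 2 = yi := by rw [← hymin, ← hymax]; exact hmid
      have hmids' : (yb' + yt') / 2 = yj := by rw [← hymin', ← hymax']; exact hmid'
      have hne : ¬(yb = yb' ∧ yt = yt') := by
        rintro ⟨h1, h2⟩
        apply hjne
        rw [← hmids', ← hmids, h1, h2]
      rcases DyIn_nested hRlt hdy hdy' hj1 hj2 hbyi' hyit' with ⟨h1, h2⟩ | ⟨h1, h2⟩
      · -- [yb',yt'] inside [yb,yt] : split by half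
        rcases DyIn_half hRlt hdy hdy' h1 h2 hne with h | h
        · rw [hmids] at h
          exact Or.inl ⟨h1, h⟩
        · rw [hmids] at h
          exact Or.inr ⟨h, h2⟩
      · -- [yb,yt] inside [yb',yt'] : contradiction
        exfalso
        have hne' : ¬(yb' = yb ∧ yt' = yt) := fun ⟨ha, hb⟩ => hne ⟨ha.symm, hb.symm⟩
        rcases DyIn_half hRlt hdy' hdy h1 h2 hne' with h | h
        · rw [hmids'] at h; linarith
        · rw [hmids'] at h; linarith

end Span

lemma rect_horiz_edge_subset_frontier (c : Rect) {y : ℝ} (hy : y = c.ymin ∨ y = c.ymax) :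
    Set.Icc c.xmin c.xmax ×ˢ ({y} : Set ℝ) ⊆ frontier c.toSet := by
  rintro ⟨u, v⟩ hu
  obtain ⟨⟨h1, h2⟩, rfl⟩ := mem_horiz_seg.mp hu
  rw [rect_frontier_iff]
  constructor
  · rw [mem_rect]
    refine ⟨⟨h1, h2⟩, ?_⟩
    rcases hy with h | h <;> rw [h]
    · exact ⟨le_refl _, c.hy.le⟩
    · exact ⟨c.hy.le, le_refl _⟩
  · rcases hy with h | h
    · exact Or.inr (Or.inr (Or.inl h))
    · exact Or.inr (Or.inr (Or.inr h))

lemma cell_edge_final (H : HierMesh) {k : ℕ} (hk : k ≤ H.M) {c : Rect}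
    (hc : c ∈ (H.level k).cells) {y : ℝ} (hy : y = c.ymin ∨ y = c.ymax) :
    ∃ α β, HorizLEdgeAt H.final α β y := by
  have hsub : Set.Icc c.xmin c.xmax ×ˢ ({y} : Set ℝ) ⊆ H.final.skeleton :=
    (rect_horiz_edge_subset_frontier c hy).trans
      ((frontier_subset_skeleton _ hc).trans (skeleton_le_final H hk))
  obtain ⟨α, β, _, _, h⟩ := exists_maximal_horiz H.final c.hx hsub
  exact ⟨α, β, h⟩

lemma support_heights_edges (H : HierMesh) {a b yi yb yt : ℝ}
    (hedge : HorizLEdgeAt H.final a b yi) (hsh : SupportHeights H a b yi yb yt) :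
    (∃ α β, HorizLEdgeAt H.final α β yb) ∧ (∃ α β, HorizLEdgeAt H.final α β yt) := by
  obtain ⟨_, _, hcase⟩ := hsh
  rcases hcase with ⟨_, ⟨a', b', hb'⟩, ⟨a'', b'', ht'⟩, _⟩ |
    ⟨k, hlev, c, hcS, hymin, hymax, _, _, _⟩
  · constructor
    · obtain ⟨α, β, _, _, h⟩ := exists_maximal_horiz H.final hb'.1
        (hb'.2.2.1.trans (skeleton_le_final H (Nat.zero_le _)))
      exact ⟨α, β, h⟩
    · obtain ⟨α, β, _, _, h⟩ := exists_maximal_horiz H.final ht'.1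
        (ht'.2.2.1.trans (skeleton_le_final H (Nat.zero_le _)))
      exact ⟨α, β, h⟩
  · have hkM : k < H.M := by
      by_contra hcon
      push_neg at hcon
      exact (hlev.2 H.M (by omega)) hedge.2.2.1
    constructor
    · exact hymin ▸ cell_edge_final H hkM.le (subdivided_subset H hkM hcS) (Or.inl rfl)
    · exact hymax ▸ cell_edge_final H hkM.le (subdivided_subset H hkM hcS) (Or.inr rfl)

lemma kap_eq_zero_iff (g : ℝ × ℝ → ℝ) (a b : ℝ) {y1 y2 y3 : ℝ} (h12 : y1 < y2) (h23 : y2 < y3) :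
    kap g a b y1 y2 y3 = 0 ↔
      (y3 - y1) * (∫ s in a..b, g (s, y2)) =
        (y3 - y2) * (∫ s in a..b, g (s, y1)) + (y2 - y1) * (∫ s in a..b, g (s, y3)) := by
  unfold kap Fint
  exact (phi_kappa h12 h23).symm
/-- **Lemma 5.2 (conversion of constraints).** Over a hierarchical T-mesh, for
`g ∈ S̄(1,1,0,0,𝒯)`, the constraints along all interior horizontal l-edges expressed via the
two neighbouring heights are equivalent to the constraints expressed via the heights of the
support l-edges. (The analogous equivalence for interior vertical l-edges follows by
instantiating this universally quantified theorem at the transposed mesh.) -/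
theorem constraints_support_conversion (H : HierMesh) (g : ℝ × ℝ → ℝ)
    (hg : g ∈ SBar 1 1 0 0 H.final)
    (N : ℕ) (ys : ℕ → ℝ) (hmono : ∀ i < N, ys i < ys (i + 1))
    (hys : ∀ y : ℝ, (∃ a b : ℝ, HorizLEdgeAt H.final a b y) ↔ ∃ i ≤ N, ys i = y) :
    (∀ i a b, 0 < i → i < N → a < b →
        IsInteriorLEdge H.final (Set.Icc a b ×ˢ ({ys i} : Set ℝ)) →
        (ys (i + 1) - ys (i - 1)) * (∫ s in a..b, g (s, ys i)) =
          (ys (i + 1) - ys i) * (∫ s in a..b, g (s, ys (i - 1))) +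
          (ys i - ys (i - 1)) * (∫ s in a..b, g (s, ys (i + 1)))) ↔
    (∀ a b yi yb yt : ℝ, a < b →
        IsInteriorLEdge H.final (Set.Icc a b ×ˢ ({yi} : Set ℝ)) →
        SupportHeights H a b yi yb yt →
        (yt - yb) * (∫ s in a..b, g (s, yi)) =
          (yt - yi) * (∫ s in a..b, g (s, yb)) +
          (yi - yb) * (∫ s in a..b, g (s, yt))) := by
  classical
  obtain ⟨hgzero, hgpoly, hgsm⟩ := hg
  have hgc : Continuous g := g_continuous ⟨hgzero, hgpoly, hgsm⟩
  obtain ⟨p0, q0, gx, gy, hp0, hq0, hgx, hgy, hcells⟩ := H.tensor0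
  have hOuter0 : (H.level 0).outer = H.final.outer := level_outer_eq H H.M (le_refl _) ▸ rfl
  have hidx : ∀ {α β y : ℝ}, HorizLEdgeAt H.final α β y → ∃ i ≤ N, ys i = y :=
    fun {α β y} h => (hys y).mp ⟨α, β, h⟩
  have hbnds : ∀ {α β y : ℝ}, HorizLEdgeAt H.final α β y →
      H.final.outer.xmin ≤ α ∧ β ≤ H.final.outer.xmax ∧
      H.final.outer.ymin ≤ y ∧ y ≤ H.final.outer.ymax := by
    intro α β y h
    have h1 := skeleton_x_bounds H.final (h.2.2.1 (mem_horiz_seg.mpr ⟨⟨le_refl _, h.1.le⟩, rfl⟩))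
    have h2 := skeleton_x_bounds H.final (h.2.2.1 (mem_horiz_seg.mpr ⟨⟨h.1.le, le_refl _⟩, rfl⟩))
    exact ⟨h1.1, h2.2.1, h1.2.2.1, h1.2.2.2⟩
  have hminedge : ∃ α β, HorizLEdgeAt H.final α β H.final.outer.ymin := by
    obtain ⟨hy0, _⟩ := tensor_y_bounds (H.level 0) hp0 hq0 hgx hgy hcells
    have hline := tensor_line_subset (H.level 0) hp0 hq0 hgx hgy hcells (Nat.zero_le q0)
    rw [hy0, hOuter0] at hline
    obtain ⟨α, β, _, _, h⟩ := exists_maximal_horiz H.final H.final.outer.hx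
      (hline.trans (skeleton_le_final H (Nat.zero_le _)))
    exact ⟨α, β, h⟩
  have hmaxedge : ∃ α β, HorizLEdgeAt H.final α β H.final.outer.ymax := by
    obtain ⟨_, hyq⟩ := tensor_y_bounds (H.level 0) hp0 hq0 hgx hgy hcells
    have hline := tensor_line_subset (H.level 0) hp0 hq0 hgx hgy hcells (le_refl q0)
    rw [hyq, hOuter0] at hline
    obtain ⟨α, β, _, _, h⟩ := exists_maximal_horiz H.final H.final.outer.hx
      (hline.trans (skeleton_le_final H (Nat.zero_le _)))
    exact ⟨α, β, h⟩
  have hys0 : ys 0 = H.final.outer.ymin := by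
    obtain ⟨α, β, h⟩ := hminedge
    obtain ⟨i0, hi0, he⟩ := hidx h
    have h1 : ys 0 ≤ H.final.outer.ymin := he ▸ grid_le hmono (Nat.zero_le i0) hi0
    have h2 : H.final.outer.ymin ≤ ys 0 := by
      obtain ⟨α', β', h'⟩ := (hys (ys 0)).mpr ⟨0, Nat.zero_le _, rfl⟩
      exact (hbnds h').2.2.1
    exact le_antisymm h1 h2
  have hysN : ys N = H.final.outer.ymax := by
    obtain ⟨α, β, h⟩ := hmaxedge
    obtain ⟨i0, hi0, he⟩ := hidx h
    have h1 : H.final.outer.ymax ≤ ys N := he ▸ grid_le hmono hi0 (le_refl N)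
    have h2 : ys N ≤ H.final.outer.ymax := by
      obtain ⟨α', β', h'⟩ := (hys (ys N)).mpr ⟨N, le_refl _, rfl⟩
      exact (hbnds h').2.2.2
    exact le_antisymm h2 h1
  have hysmono : ∀ {i j : ℕ}, i < j → j ≤ N → ys i < ys j :=
    fun h1 h2 => grid_lt hmono h1 h2
  have hidxlt : ∀ {i j : ℕ}, i ≤ N → j ≤ N → ys i < ys j → i < j :=
    fun h1 h2 h3 => grid_index_lt hmono h1 h2 h3
  have hidxle : ∀ {i j : ℕ}, i ≤ N → j ≤ N → ys i ≤ ys j → i ≤ j := by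
    intro i j h1 h2 h3
    by_contra hcon
    push_neg at hcon
    exact absurd h3 (not_le.mpr (hysmono hcon h1))
  have hidxinj : ∀ {i j : ℕ}, i ≤ N → j ≤ N → ys i = ys j → i = j := by
    intro i j h1 h2 h3
    rcases Nat.lt_trichotomy i j with h | h | h
    · exact absurd h3 (ne_of_lt (hysmono h h2))
    · exact h
    · exact absurd h3 (ne_of_gt (hysmono h h1))
  have hstradj : ∀ j, 0 < j → j < N → ∀ d ∈ H.final.cells,
      d.ymin < ys j → ys j < d.ymax → d.ymin ≤ ys (j-1) ∧ ys (j+1) ≤ d.ymax := by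
    intro j hj0 hjN d hd h1 h2
    constructor
    · obtain ⟨α, β, _, _, hedgeb⟩ := cell_edge_horiz H.final hd (Or.inl rfl)
      obtain ⟨m, hm, hym⟩ := hidx hedgeb
      have hmj : m < j := hidxlt hm (by omega) (by rw [hym]; exact h1)
      calc d.ymin = ys m := hym.symm
        _ ≤ ys (j-1) := grid_le hmono (by omega) (by omega)
    · obtain ⟨α, β, _, _, hedget⟩ := cell_edge_horiz H.final hd (Or.inr rfl)
      obtain ⟨m, hm, hym⟩ := hidx hedget
      have hmj : j < m := hidxlt (by omega) hm (by rw [hym]; exact h2)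
      calc ys (j+1) ≤ ys m := grid_le hmono (by omega) hm
        _ = d.ymax := hym
  have KD : ∀ (a b : ℝ) (j : ℕ), a < b → 0 < j → j < N →
      H.final.outer.xmin ≤ a → b ≤ H.final.outer.xmax →
      (∀ α β, HorizLEdgeAt H.final α β (ys j) →
        (∃ x0, α ≤ x0 ∧ x0 ≤ β ∧ a < x0 ∧ x0 < b) → a ≤ α ∧ β ≤ b) →
      (∀ α β, HorizLEdgeAt H.final α β (ys j) → a ≤ α → β ≤ b →
        kap g α β (ys (j-1)) (ys j) (ys (j+1)) = 0) →
      kap g a b (ys (j-1)) (ys j) (ys (j+1)) = 0 := by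
    intro a b j hab hj0 hjN haΩ hbΩ Hnest Hedges
    exact kink_decomposition hgc hgpoly (hysmono (by omega) (by omega))
      (hysmono (by omega) (by omega))
      (by rw [← hys0]; exact grid_le hmono (by omega) (by omega))
      (by rw [← hysN]; exact grid_le hmono (by omega) (by omega))
      hab haΩ hbΩ (hstradj j hj0 hjN) Hnest Hedges
  constructor
  · -- (1) → (2)
    intro h1 a b yi yb yt hab hintedge hsh
    have hedge : HorizLEdgeAt H.final a b yi := ⟨hab, hintedge.1⟩
    obtain ⟨i, hiN, hysi⟩ := hidx hedge
    obtain ⟨⟨αb', βb', hbedge⟩, ⟨αt', βt', htedge⟩⟩ := support_heights_edges H hedge hsh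
    obtain ⟨p, hpN, hysp⟩ := hidx hbedge
    obtain ⟨q, hqN, hysq⟩ := hidx htedge
    obtain ⟨hbyi, hyit, _⟩ := id hsh
    have hpi : p < i := hidxlt hpN hiN (by rw [hysp, hysi]; exact hbyi)
    have hiq : i < q := hidxlt hiN hqN (by rw [hysi, hysq]; exact hyit)
    have hyint := interior_edge_height H.final hedge hintedge.2
    have hi0 : 0 < i := hidxlt (Nat.zero_le N) hiN (by rw [hys0, hysi]; exact hyint.1)
    have hiNlt : i < N := hidxlt hiN (le_refl N) (by rw [hysi, hysN]; exact hyint.2)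
    have habounds := hbnds hedge
    have hint2 : IsInteriorLEdge H.final (Set.Icc a b ×ˢ ({ys i} : Set ℝ)) := by
      rw [hysi]; exact hintedge
    have hkinks : ∀ j, p < j → j < q → kap g a b (ys (j-1)) (ys j) (ys (j+1)) = 0 := by
      intro j hpj hjq
      have hj0 : 0 < j := by omega
      have hjN : j < N := by omega
      by_cases hji : j = i
      · subst hji
        exact (kap_eq_zero_iff g a b (hysmono (by omega) (by omega))
          (hysmono (by omega) (by omega))).mpr (h1 j a b hj0 hjN hab hint2)
      · apply KD a b j hab hj0 hjN habounds.1 habounds.2.1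
        · intro α β he hx
          exact support_nest H hp0 hq0 hgx hgy hcells hedge hsh
            (by rw [← hysp]; exact hysmono hpj (by omega))
            (by rw [← hysq]; exact hysmono hjq hqN) α β he hx
        · intro α β he hαa hβb
          have hint' : IsInteriorLEdge H.final (Set.Icc α β ×ˢ ({ys j} : Set ℝ)) :=
            interior_ledge_of_height H.final he
              (by rw [← hys0]; exact hysmono (by omega) (by omega))
              (by rw [← hysN]; exact hysmono (by omega) (by omega))
          exact (kap_eq_zero_iff g α β (hysmono (by omega) (by omega))
            (hysmono (by omega) (by omega))).mpr (h1 j α β hj0 hjN he.1 hint')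
    set F : ℕ → ℝ := fun j => ∫ s in a..b, g (s, ys j) with hF
    have hkinks' : ∀ j, p < j → j < q →
        (F (j+1) - F j) / (ys (j+1) - ys j) = (F j - F (j-1)) / (ys j - ys (j-1)) := by
      intro j hh1 hh2
      have := hkinks j hh1 hh2
      unfold kap Fint at this
      exact sub_eq_zero.mp this
    have hch1 := tele ys F p i (fun j hh1 hh2 => hkinks' j hh1 (by omega))
      (fun j hh1 hh2 => hysmono (by omega) (by omega)) hpi.le
    have hch2 := tele ys F i q (fun j hh1 hh2 => hkinks' j (by omega) hh2)
      (fun j hh1 hh2 => hysmono (by omega) (by omega)) hiq.le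
    have hsl : (F (i+1) - F i) / (ys (i+1) - ys i) = (F (p+1) - F p) / (ys (p+1) - ys p) :=
      slope_const ys F p q hkinks' i hpi.le hiq
    rw [hsl] at hch2
    rw [← hysi, ← hysp, ← hysq]
    show (ys q - ys p) * F i = (ys q - ys i) * F p + (ys i - ys p) * F q
    linear_combination (ys q - ys i) * hch1 - (ys i - ys p) * hch2
  · -- (2) → (1)
    intro h2 i a b hi0 hiN hab hintedge
    have MAIN : ∀ n, ∀ a b yi yb yt : ℝ, ∀ p q i' : ℕ, a < b →
        IsInteriorLEdge H.final (Set.Icc a b ×ˢ ({yi} : Set ℝ)) →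
        SupportHeights H a b yi yb yt →
        p ≤ N → q ≤ N → i' ≤ N → ys p = yb → ys q = yt → ys i' = yi →
        q - p ≤ n →
        kap g a b (ys (i'-1)) (ys i') (ys (i'+1)) = 0 := by
      intro n
      induction n using Nat.strong_induction_on with
      | _ n IH =>
      intro a b yi yb yt p q i' hab hint hsh hpN hqN hi'N hysp hysq hysi hspan
      have hedge : HorizLEdgeAt H.final a b yi := ⟨hab, hint.1⟩
      obtain ⟨hbyi, hyit, _⟩ := id hsh
      have hpi : p < i' := hidxlt hpN hi'N (by rw [hysp, hysi]; exact hbyi)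
      have hiq : i' < q := hidxlt hi'N hqN (by rw [hysi, hysq]; exact hyit)
      have hyint := interior_edge_height H.final hedge hint.2
      have hi'0 : 0 < i' := hidxlt (Nat.zero_le N) hi'N (by rw [hys0, hysi]; exact hyint.1)
      have hi'Nlt : i' < N := hidxlt hi'N (le_refl N) (by rw [hysi, hysN]; exact hyint.2)
      have habounds := hbnds hedge
      have hΦ := h2 a b yi yb yt hab hint hsh
      have hkinks : ∀ j, p < j → j < q → j ≠ i' →
          kap g a b (ys (j-1)) (ys j) (ys (j+1)) = 0 := by
        intro j hpj hjq hji
        have hj0 : 0 < j := by omega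
        have hjN : j < N := by omega
        apply KD a b j hab hj0 hjN habounds.1 habounds.2.1
        · intro α β he hx
          exact support_nest H hp0 hq0 hgx hgy hcells hedge hsh
            (by rw [← hysp]; exact hysmono hpj (by omega))
            (by rw [← hysq]; exact hysmono hjq hqN) α β he hx
        · intro α β he hαa hβb
          have hjlo : H.final.outer.ymin < ys j := by
            rw [← hys0]; exact hysmono (by omega) (by omega)
          have hjhi : ys j < H.final.outer.ymax := by
            rw [← hysN]; exact hysmono (by omega) (le_refl N)
          have hint' : IsInteriorLEdge H.final (Set.Icc α β ×ˢ ({ys j} : Set ℝ)) :=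
            interior_ledge_of_height H.final he hjlo hjhi
          obtain ⟨yb', yt', hsh'⟩ := exists_support H hp0 hq0 hgx hgy hcells he hjlo hjhi
          obtain ⟨⟨αb'', βb'', hbe⟩, ⟨αt'', βt'', hte⟩⟩ := support_heights_edges H he hsh'
          obtain ⟨p', hp'N, hysp'⟩ := hidx hbe
          obtain ⟨q', hq'N, hysq'⟩ := hidx hte
          have hspan' := support_span H hp0 hq0 hgx hgy hcells hedge hsh he hsh'
            (by rw [← hysp]; exact hysmono hpj (by omega))
            (by rw [← hysq]; exact hysmono hjq hqN)
            (fun hcon => hji (hidxinj (by omega) hi'N (hcon.trans hysi.symm) ▸ rfl))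
          have hq'p' : q' - p' < n := by
            rcases hspan' with ⟨hA, hB⟩ | ⟨hA, hB⟩
            · have hh1 : p ≤ p' := hidxle hpN hp'N (by rw [hysp, hysp']; exact hA)
              have hh2 : q' ≤ i' := hidxle hq'N hi'N (by rw [hysq', hysi]; exact hB)
              omega
            · have hh1 : i' ≤ p' := hidxle hi'N hp'N (by rw [hysi, hysp']; exact hA)
              have hh2 : q' ≤ q := hidxle hq'N hqN (by rw [hysq', hysq]; exact hB)
              omega
          exact IH (q' - p') hq'p' α β (ys j) yb' yt' p' q' j he.1 hint' hsh'
            hp'N hq'N (by omega) hysp' hysq' rfl (le_refl _)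
      set F : ℕ → ℝ := fun j => ∫ s in a..b, g (s, ys j) with hF
      have hkinks' : ∀ j, p < j → j < q → j ≠ i' →
          (F (j+1) - F j) / (ys (j+1) - ys j) = (F j - F (j-1)) / (ys j - ys (j-1)) := by
        intro j hh1 hh2 hh3
        have := hkinks j hh1 hh2 hh3
        unfold kap Fint at this
        exact sub_eq_zero.mp this
      have hch1 := tele ys F p i' (fun j hh1 hh2 => hkinks' j hh1 (by omega) (by omega))
        (fun j hh1 hh2 => hysmono (by omega) (by omega)) hpi.le
      have hch2 := tele ys F i' q (fun j hh1 hh2 => hkinks' j (by omega) hh2 (by omega))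
        (fun j hh1 hh2 => hysmono (by omega) (by omega)) hiq.le
      have hd1 : ys i' - ys p ≠ 0 := ne_of_gt (sub_pos.mpr (hysmono hpi hi'N))
      have hd2 : ys q - ys i' ≠ 0 := ne_of_gt (sub_pos.mpr (hysmono hiq hqN))
      have hΦ' : (F q - F i') / (ys q - ys i') = (F i' - F p) / (ys i' - ys p) := by
        have h12 : ys p < ys i' := hysmono hpi hi'N
        have h23 : ys i' < ys q := hysmono hiq hqN
        apply sub_eq_zero.mp
        apply (phi_kappa h12 h23).mp
        rw [← hysp, ← hysq, ← hysi] at hΦ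
        exact hΦ
      have hL : (F i' - F p) / (ys i' - ys p) = (F (p+1) - F p) / (ys (p+1) - ys p) := by
        rw [hch1, mul_div_assoc, div_self hd1, mul_one]
      have hR : (F q - F i') / (ys q - ys i') = (F (i'+1) - F i') / (ys (i'+1) - ys i') := by
        rw [hch2, mul_div_assoc, div_self hd2, mul_one]
      have hslope_i : (F (i'+1) - F i') / (ys (i'+1) - ys i')
          = (F (p+1) - F p) / (ys (p+1) - ys p) := by
        rw [← hR, hΦ', hL]
      have hslope_im : (F (i'-1+1) - F (i'-1)) / (ys (i'-1+1) - ys (i'-1))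
          = (F (p+1) - F p) / (ys (p+1) - ys p) :=
        slope_const ys F p i' (fun j hh1 hh2 => hkinks' j hh1 (by omega) (by omega))
          (i'-1) (by omega) (by omega)
      have hii : i' - 1 + 1 = i' := by omega
      rw [hii] at hslope_im
      show (F (i'+1) - F i') / (ys (i'+1) - ys i') - (F i' - F (i'-1)) / (ys i' - ys (i'-1)) = 0
      rw [hslope_i, hslope_im]
      ring
    have hedge : HorizLEdgeAt H.final a b (ys i) := ⟨hab, hintedge.1⟩
    have hjlo : H.final.outer.ymin < ys i := by
      rw [← hys0]; exact hysmono hi0 (by omega)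
    have hjhi : ys i < H.final.outer.ymax := by
      rw [← hysN]; exact hysmono hiN (le_refl N)
    obtain ⟨yb, yt, hsh⟩ := exists_support H hp0 hq0 hgx hgy hcells hedge hjlo hjhi
    obtain ⟨⟨αb', βb', hbe⟩, ⟨αt', βt', hte⟩⟩ := support_heights_edges H hedge hsh
    obtain ⟨p, hpN, hysp⟩ := hidx hbe
    obtain ⟨q, hqN, hysq⟩ := hidx hte
    have hkap := MAIN N a b (ys i) yb yt p q i hab hintedge hsh hpN hqN (by omega)
      hysp hysq rfl (by omega)
    exact (kap_eq_zero_iff g a b (hysmono (by omega) (by omega))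
      (hysmono (by omega) (by omega))).mp hkap
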